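/- arXiv:1902.01469 — 14 statements merged into one kernel-verified Lean document; each statement's English description precedes it below -/
import Mathlib

section
/- Let (X,P,B) be a connected unbounded ballean and Y a subset of X, and set C(Y) = {X \ {y} : y ∈ Y} ⊆ 𝒫(X). Then C(Y) is a bounded subset of the hyperballean exp(B) if and only if there exists α ∈ P such that the ball B(y,α) has more than one element for every y ∈ Y. -/
open Set Cardinal

universe u v

variable {X : Type*} {Y : Type*} {P : Type*} {Q : Type*}

/-- The ball around a set: `B(A, r) = ⋃_{y ∈ A} B(y, r)`. -/
def ballSet (B : X → P → Set X) (A : Set X) (r : P) : Set X := ⋃ y ∈ A, B y r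

/-- `B : X → P → Set X` is the ball structure of a ballean with support `X` and radii `P`. -/
def IsBalleanBall (B : X → P → Set X) : Prop :=
  Nonempty P ∧ (∀ x r, x ∈ B x r) ∧ (∀ x y r, x ∈ B y r ↔ y ∈ B x r) ∧
    (∀ r s, ∃ t, ∀ x, ballSet B (B x r) s ⊆ B x t)

/-- A map between balleans is coarse. -/
def IsCoarse (BX : X → P → Set X) (BY : Y → Q → Set Y) (f : X → Y) : Prop :=
  ∀ r, ∃ s, ∀ x, f '' BX x r ⊆ BY (f x) s

/-- A map between balleans is effectively proper. -/
def IsEffectivelyProper (BX : X → P → Set X) (BY : Y → Q → Set Y) (f : X → Y) : Prop :=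
  ∀ s, ∃ r, ∀ x, f ⁻¹' BY (f x) s ⊆ BX x r

/-- A coarse embedding is a map that is both coarse and effectively proper. -/
def IsCoarseEmbedding (BX : X → P → Set X) (BY : Y → Q → Set Y) (f : X → Y) : Prop :=
  IsCoarse BX BY f ∧ IsEffectivelyProper BX BY f

/-- An asymorphism is a bijective map that is both coarse and effectively proper. -/
def IsAsymorphism (BX : X → P → Set X) (BY : Y → Q → Set Y) (f : X → Y) : Prop :=
  Function.Bijective f ∧ IsCoarse BX BY f ∧ IsEffectivelyProper BX BY f

/-- A subset of a ballean is bounded. -/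
def IsBoundedSet (B : X → P → Set X) (A : Set X) : Prop :=
  A = ∅ ∨ ∃ r, ∀ y ∈ A, A ⊆ B y r

/-- A subset of a ballean is large. -/
def IsLargeSet (B : X → P → Set X) (A : Set X) : Prop :=
  ∃ r, ballSet B A r = Set.univ

/-- A subset of a ballean is thick. -/
def IsThickSet (B : X → P → Set X) (A : Set X) : Prop :=
  ∀ r, ∃ x ∈ A, B x r ⊆ A

/-- A subset of a ballean is thin. -/
def IsThinSet (B : X → P → Set X) (A : Set X) : Prop :=
  ∀ r, ∃ V : Set X, IsBoundedSet B V ∧ ∀ x ∈ A \ V, B x r ∩ A = {x}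

/-- A `{0,1}`-valued function on a ballean is slowly oscillating. -/
def IsSlowlyOscillating (B : X → P → Set X) (f : X → Bool) : Prop :=
  ∀ r, ∃ V : Set X, IsBoundedSet B V ∧ ∀ x, x ∉ V → ∀ y ∈ B x r, ∀ z ∈ B x r, f y = f z

/-- A ballean is connected. -/
def IsConnectedBall (B : X → P → Set X) : Prop := ∀ x y, ∃ r, y ∈ B x r

/-- The connected component of a point of a ballean. -/
def balleanComponent (B : X → P → Set X) (x : X) : Set X := {y | ∃ r, y ∈ B x r}

/-- The ball structure of the hyperballean `exp B`. -/
def expBall (B : X → P → Set X) : Set X → P → Set (Set X) :=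
  fun A r => {C | A ⊆ ballSet B C r ∧ C ⊆ ballSet B A r}

/-- The ball structure of the subballean on a subset `S`. -/
def subBall (B : X → P → Set X) (S : Set X) : S → P → Set S :=
  fun y r => {z | (z : X) ∈ B (y : X) r}

/-- An ideal on a set `X`: a family of subsets closed under subsets and finite unions,
containing all finite sets, and not containing `X` itself. -/
def IsIdeal (I : Set (Set X)) : Prop :=
  (∀ A ∈ I, ∀ B ⊆ A, B ∈ I) ∧ (∀ A ∈ I, ∀ B ∈ I, A ∪ B ∈ I) ∧
    (∀ A : Set X, A.Finite → A ∈ I) ∧ Set.univ ∉ I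

/-- The ball structure of the point ideal ballean `X_I`:
`B_I(x,A) = {x}` if `x ∉ A` and `B_I(x,A) = {x} ∪ A` if `x ∈ A`. -/
def pointIdealBall (I : Set (Set X)) : X → I → Set X :=
  fun x A => insert x {y | y ∈ (A : Set X) ∧ x ∈ (A : Set X)}

/-- The ball structure of the `I`-ary ballean `X_{I-ary}`: `B(x,A) = {x} ∪ A`. -/
def aryBall (I : Set (Set X)) : X → I → Set X :=
  fun x A => insert x (A : Set X)

/-- The ball structure of the ballean `C(X,I)` on `𝒫(X)`: `B_C(Z,K) = {W | Z △ W ⊆ K}`. -/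
def cBall (I : Set (Set X)) : Set X → I → Set (Set X) :=
  fun Z K => {W | symmDiff Z W ⊆ (K : Set X)}

/-- The support of the flat hyperballean `X^♭`: all nonempty bounded subsets. -/
def flatSupport (B : X → P → Set X) : Set (Set X) := {A | A.Nonempty ∧ IsBoundedSet B A}

/-- Let `(X,P,B)` be a connected unbounded ballean and `Y ⊆ X`. Then
`C(Y) = {X \ {y} : y ∈ Y}` is bounded in the hyperballean `exp B` if and only if there is a
radius `r` such that `B(y,r)` has more than one element for every `y ∈ Y`. -/
theorem stmt1 {X : Type u} {P : Type v} (B : X → P → Set X) (hB : IsBalleanBall B)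
    (hconn : IsConnectedBall B) (hunb : ¬ IsBoundedSet B Set.univ) (Y : Set X) :
    IsBoundedSet (expBall B) ((fun y => ({y}ᶜ : Set X)) '' Y) ↔
      ∃ r, ∀ y ∈ Y, (B y r).Nontrivial := by
  obtain ⟨⟨r0⟩, hrefl, hsymm, -⟩ := hB
  constructor
  · rintro (hemp | ⟨r, hr⟩)
    · rw [Set.image_eq_empty] at hemp
      exact ⟨r0, fun y hy => by simp [hemp] at hy⟩
    · by_cases hY : ∃ y₁ ∈ Y, ∃ y₂ ∈ Y, y₁ ≠ y₂
      · obtain ⟨y₁, hy₁, y₂, hy₂, h12⟩ := hY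
        refine ⟨r, fun y hy => ?_⟩
        obtain ⟨y'', hy'', hne⟩ : ∃ y'' ∈ Y, y'' ≠ y := by
          rcases eq_or_ne y y₁ with rfl | h
          · exact ⟨y₂, hy₂, fun h => h12 h.symm⟩
          · exact ⟨y₁, hy₁, fun h' => h h'.symm⟩
        have h1 : ({y}ᶜ : Set X) ∈ expBall B ({y''}ᶜ : Set X) r :=
          hr _ ⟨y'', hy'', rfl⟩ ⟨y, hy, rfl⟩
        have hyin : y ∈ ballSet B ({y}ᶜ : Set X) r := by
          apply h1.1
          simp [Ne.symm hne]
        simp only [ballSet, Set.mem_iUnion, Set.mem_compl_iff, Set.mem_singleton_iff] at hyin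
        obtain ⟨z, hz, hmem⟩ := hyin
        exact ⟨z, (hsymm z y r).mpr hmem, y, hrefl y r, hz⟩
      · push_neg at hY
        rcases Set.eq_empty_or_nonempty Y with rfl | ⟨y, hy⟩
        · exact ⟨r0, fun y hy => by simp at hy⟩
        · obtain ⟨z, hz⟩ : ∃ z : X, z ≠ y := by
            by_contra h
            push_neg at h
            exact hunb (Or.inr ⟨r0, fun w _ x _ => by rw [h x, ← h w]; exact hrefl w r0⟩)
          obtain ⟨r, hrz⟩ := hconn y z
          refine ⟨r, fun y' hy' => ?_⟩
          rw [hY y' hy' y hy]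
          exact ⟨z, hrz, y, hrefl y r, hz⟩
  · rintro ⟨r, hr⟩
    rcases Set.eq_empty_or_nonempty Y with rfl | hYne
    · exact Or.inl (by simp)
    · refine Or.inr ⟨r, ?_⟩
      have key : ∀ y' ∈ Y, ∀ x : X, x ∈ ballSet B ({y'}ᶜ : Set X) r := by
        intro y' hy' x
        rcases eq_or_ne x y' with rfl | hx
        · obtain ⟨a, ha, b, hb, hab⟩ := hr x hy'
          rcases eq_or_ne a x with hax | hax
          · have hbx : b ≠ x := fun h => hab (hax.trans h.symm)
            have : x ∈ B b r := (hsymm x b r).mpr hb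
            exact Set.mem_biUnion (by simp [hbx]) this
          · have : x ∈ B a r := (hsymm x a r).mpr ha
            exact Set.mem_biUnion (by simp [hax]) this
        · exact Set.mem_biUnion (by simp [hx]) (hrefl x r)
      rintro _ ⟨y, hy, rfl⟩ _ ⟨y', hy', rfl⟩
      exact ⟨fun x _ => key y' hy' x, fun x _ => key y hy x⟩
end

section
/- Let (X,P,B) be an unbounded connected ballean. Then the following are equivalent: (i) X is thin; (ii) the identity map of X is an asymorphism from (X,P,B) to the point ideal ballean X_{♭(X)}, where ♭(X) is the ideal of all bounded subsets of X; (iii) every subset of X that is not thick is bounded; (iv) the subballean of exp(B) whose support is the family of all nonempty non-thick subsets of X is connected; (v) the map C : X → 𝒫(X), C(x) = X \ {x}, is injective and is an asymorphism from (X,P,B) onto the subballean of exp(B) on C(X) = {X \ {x} : x ∈ X}; (vi) every function f : X → {0,1} is slowly oscillating. -/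
open Set Cardinal

universe u v

variable {X : Type*} {Y : Type*} {P : Type*} {Q : Type*}

/-!
Everything is read off the sets `nonIsolated B r` of points whose `r`-ball is not a singleton:
`X` is thin iff all of them are bounded, and each of the other conditions says the same thing in
another language. The one step with content is (iii) → (i): a maximal subset `M` of
`nonIsolated B r` whose points are pairwise at distance more than `r` is not thick, since every
`x ∈ M` has a neighbour in `B x r` outside `M`; hence `M` is bounded, and by maximality its
`r`-neighbourhood covers `nonIsolated B r`.
-/

lemma exists_maximal_pairwise_subset {α : Type*} (D : Set α) (R : α → α → Prop) :
    ∃ M, Maximal (fun M => M ⊆ D ∧ M.Pairwise R) M :=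
  zorn_subset _ fun c hc hchain =>
    ⟨⋃₀ c,
      ⟨sUnion_subset fun _ hs => (hc hs).1, hchain.pairwise_sUnion.2 fun _ hs => (hc hs).2⟩,
      fun _ hs => subset_sUnion_of_mem hs⟩

section Ballean

variable {X : Type u} {P : Type v} {B : X → P → Set X}

def nonIsolated (B : X → P → Set X) (r : P) : Set X := {x | B x r ≠ {x}}

lemma mem_ballSet_iff {A : Set X} {r : P} {z : X} :
    z ∈ ballSet B A r ↔ ∃ y ∈ A, z ∈ B y r := by
  simp [ballSet]

lemma ballSet_singleton (x : X) (r : P) : ballSet B {x} r = B x r := by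
  simp [ballSet]

lemma mem_pointIdealBall {I : Set (Set X)} {x y : X} {A : I} :
    y ∈ pointIdealBall I x A ↔ y = x ∨ (y ∈ (A : Set X) ∧ x ∈ (A : Set X)) :=
  Iff.rfl

lemma IsBalleanBall.mem_ball_self (hB : IsBalleanBall B) (x : X) (r : P) : x ∈ B x r :=
  hB.2.1 x r

lemma IsBalleanBall.mem_ball_comm (hB : IsBalleanBall B) {x y : X} {r : P} :
    x ∈ B y r ↔ y ∈ B x r :=
  hB.2.2.1 x y r

lemma IsBalleanBall.exists_ballSet_ball_subset (hB : IsBalleanBall B) (r s : P) :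
    ∃ t, ∀ x, ballSet B (B x r) s ⊆ B x t :=
  hB.2.2.2 r s

lemma IsBoundedSet.mono {A C : Set X} (hC : IsBoundedSet B C) (hAC : A ⊆ C) :
    IsBoundedSet B A := by
  rcases A.eq_empty_or_nonempty with hA | ⟨a, ha⟩
  · exact Or.inl hA
  rcases hC with hC | ⟨r, hr⟩
  · exact absurd (hAC ha) (hC ▸ notMem_empty a)
  · exact Or.inr ⟨r, fun y hy => hAC.trans (hr y (hAC hy))⟩

lemma IsBoundedSet.exists_subset_ball {A : Set X} (hA : IsBoundedSet B A) {a : X}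
    (ha : a ∈ A) : ∃ r, A ⊆ B a r := by
  rcases hA with hA | ⟨r, hr⟩
  · exact absurd ha (hA ▸ notMem_empty a)
  · exact ⟨r, hr a ha⟩

lemma isBoundedSet_of_subset_ball (hB : IsBalleanBall B) {A : Set X} {x : X} {r : P}
    (h : A ⊆ B x r) : IsBoundedSet B A := by
  obtain ⟨t, ht⟩ := hB.exists_ballSet_ball_subset r r
  exact Or.inr ⟨t, fun y hy z hz =>
    ht y (mem_ballSet_iff.2 ⟨x, hB.mem_ball_comm.1 (h hy), h hz⟩)⟩

lemma isBoundedSet_ballSet (hB : IsBalleanBall B) {A : Set X} (hA : IsBoundedSet B A) (r : P) :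
    IsBoundedSet B (ballSet B A r) := by
  rcases A.eq_empty_or_nonempty with rfl | ⟨a, ha⟩
  · exact Or.inl (by simp [ballSet])
  obtain ⟨s, hs⟩ := hA.exists_subset_ball ha
  obtain ⟨t, ht⟩ := hB.exists_ballSet_ball_subset s r
  refine isBoundedSet_of_subset_ball hB (x := a) (r := t) fun z hz => ?_
  obtain ⟨y, hy, hzy⟩ := mem_ballSet_iff.1 hz
  exact ht a (mem_ballSet_iff.2 ⟨y, hs hy, hzy⟩)

lemma IsBoundedSet.union (hB : IsBalleanBall B) (hconn : IsConnectedBall B) {A C : Set X}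
    (hA : IsBoundedSet B A) (hC : IsBoundedSet B C) : IsBoundedSet B (A ∪ C) := by
  rcases A.eq_empty_or_nonempty with rfl | ⟨a, ha⟩
  · simpa using hC
  rcases C.eq_empty_or_nonempty with rfl | ⟨c, hc⟩
  · simpa using hA
  obtain ⟨r, hr⟩ := hA.exists_subset_ball ha
  obtain ⟨s, hs⟩ := hC.exists_subset_ball hc
  obtain ⟨u, hu⟩ := hconn a c
  obtain ⟨t, ht⟩ := hB.exists_ballSet_ball_subset u s
  obtain ⟨t', ht'⟩ := hB.exists_ballSet_ball_subset r t
  have hCt : C ⊆ B a t := fun z hz => ht a (mem_ballSet_iff.2 ⟨c, hu, hs hz⟩)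
  have hAt' : A ⊆ B a t' := fun z hz =>
    ht' a (mem_ballSet_iff.2 ⟨z, hr hz, hB.mem_ball_self z t⟩)
  have hCt' : C ⊆ B a t' := fun z hz =>
    ht' a (mem_ballSet_iff.2 ⟨a, hB.mem_ball_self a r, hCt hz⟩)
  exact isBoundedSet_of_subset_ball hB (union_subset hAt' hCt')

lemma IsBoundedSet.exists_forall_mem_ball (hB : IsBalleanBall B) {W : Set X}
    (hW : IsBoundedSet B W) : ∃ s, ∀ x y, y = x ∨ (y ∈ W ∧ x ∈ W) → y ∈ B x s := by
  rcases hW with rfl | ⟨s, hs⟩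
  · obtain ⟨r⟩ := hB.1
    exact ⟨r, fun x y h => by simpa [h.resolve_right (by simp)] using hB.mem_ball_self x r⟩
  · refine ⟨s, fun x y => ?_⟩
    rintro (rfl | ⟨hy, hx⟩)
    exacts [hB.mem_ball_self y s, hs x hx hy]

lemma exists_mem_expBall_of_isBoundedSet (hB : IsBalleanBall B) (hconn : IsConnectedBall B)
    {A C : Set X} (hA : IsBoundedSet B A) (hC : IsBoundedSet B C) (hAne : A.Nonempty)
    (hCne : C.Nonempty) : ∃ t, C ∈ expBall B A t := by
  obtain ⟨a, ha⟩ := hAne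
  obtain ⟨c, hc⟩ := hCne
  rcases hA.union hB hconn hC with h | ⟨t, ht⟩
  · exact absurd h (Set.nonempty_of_mem (mem_union_left C ha)).ne_empty
  · exact ⟨t, fun z hz => mem_ballSet_iff.2 ⟨c, hc, ht c (Or.inr hc) (Or.inl hz)⟩,
      fun z hz => mem_ballSet_iff.2 ⟨a, ha, ht a (Or.inl ha) (Or.inr hz)⟩⟩

lemma mem_nonIsolated_iff (hB : IsBalleanBall B) {x : X} {r : P} :
    x ∈ nonIsolated B r ↔ ∃ y ∈ B x r, y ≠ x := by
  simp [nonIsolated, eq_singleton_iff_unique_mem, hB.mem_ball_self]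

lemma eq_of_mem_ball_of_notMem_nonIsolated {x y : X} {r : P} (hx : x ∉ nonIsolated B r)
    (hy : y ∈ B x r) : y = x := by
  have hball : B x r = {x} := not_not.1 hx
  exact mem_singleton_iff.1 (hball ▸ hy)

lemma isThinSet_univ_iff :
    IsThinSet B univ ↔ ∀ r, IsBoundedSet B (nonIsolated B r) := by
  refine ⟨fun h r => ?_, fun h r => ⟨_, h r, fun x hx => ?_⟩⟩
  · obtain ⟨V, hV, hVr⟩ := h r
    refine hV.mono fun x hx => ?_
    by_contra hxV
    exact hx (by simpa using hVr x ⟨mem_univ x, hxV⟩)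
  · simpa [nonIsolated] using hx.2

lemma subset_ballSet_of_maximal_separated (hB : IsBalleanBall B) {D M : Set X} {r : P}
    (hM : Maximal (fun M => M ⊆ D ∧ M.Pairwise fun x y => y ∉ B x r) M) :
    D ⊆ ballSet B M r := by
  intro d hd
  by_cases hdM : d ∈ M
  · exact mem_ballSet_iff.2 ⟨d, hdM, hB.mem_ball_self d r⟩
  have hins : ¬ (insert d M).Pairwise fun x y => y ∉ B x r := fun h =>
    hdM (hM.mem_of_prop_insert ⟨insert_subset hd hM.prop.1, h⟩)
  simp only [pairwise_insert, hM.prop.2, true_and, not_forall] at hins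
  obtain ⟨m, hm, -, hdm⟩ := hins
  refine mem_ballSet_iff.2 ⟨m, hm, ?_⟩
  by_contra hd
  exact hdm ⟨fun hmd => hd (hB.mem_ball_comm.1 hmd), hd⟩

lemma not_isThickSet_of_separated (hB : IsBalleanBall B) {M : Set X} {r : P}
    (hMr : M ⊆ nonIsolated B r) (hM : M.Pairwise fun x y => y ∉ B x r) : ¬ IsThickSet B M := by
  intro h
  obtain ⟨x, hx, hsub⟩ := h r
  obtain ⟨y, hy, hne⟩ := (mem_nonIsolated_iff hB).1 (hMr hx)
  exact hM hx (hsub hy) hne.symm hy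

lemma isBoundedSet_nonIsolated_of_forall_not_isThickSet (hB : IsBalleanBall B)
    (h : ∀ A : Set X, ¬ IsThickSet B A → IsBoundedSet B A) (r : P) :
    IsBoundedSet B (nonIsolated B r) := by
  obtain ⟨M, hM⟩ := exists_maximal_pairwise_subset (nonIsolated B r) fun x y => y ∉ B x r
  have hMb : IsBoundedSet B M := h M (not_isThickSet_of_separated hB hM.prop.1 hM.prop.2)
  exact (isBoundedSet_ballSet hB hMb r).mono (subset_ballSet_of_maximal_separated hB hM)

lemma isBoundedSet_of_not_isThickSet (hB : IsBalleanBall B)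
    (h : ∀ r, IsBoundedSet B (nonIsolated B r)) {A : Set X} (hA : ¬ IsThickSet B A) :
    IsBoundedSet B A := by
  simp only [IsThickSet, not_forall, not_exists, not_and] at hA
  obtain ⟨r, hr⟩ := hA
  refine (h r).mono fun x hx => (mem_nonIsolated_iff hB).2 ?_
  by_contra! hxr
  exact hr x hx fun y hy => hxr y hy ▸ hx

lemma isAsymorphism_id_pointIdealBall_iff (hB : IsBalleanBall B) :
    IsAsymorphism B (pointIdealBall {V : Set X | IsBoundedSet B V}) id ↔
      ∀ r, IsBoundedSet B (nonIsolated B r) := by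
  refine ⟨fun h r => ?_, fun h => ⟨Function.bijective_id, fun r => ?_, fun W => ?_⟩⟩
  · obtain ⟨W, hW⟩ := h.2.1 r
    refine W.2.mono fun x hx => ?_
    obtain ⟨y, hy, hne⟩ := (mem_nonIsolated_iff hB).1 hx
    exact (mem_pointIdealBall.1 (hW x (mem_image_of_mem id hy))).resolve_left hne |>.2
  · refine ⟨⟨ballSet B (nonIsolated B r) r, isBoundedSet_ballSet hB (h r) r⟩, fun x => ?_⟩
    rintro _ ⟨y, hy, rfl⟩
    by_cases hx : x ∈ nonIsolated B r
    · exact Or.inr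
        ⟨mem_ballSet_iff.2 ⟨x, hx, hy⟩, mem_ballSet_iff.2 ⟨x, hx, hB.mem_ball_self x r⟩⟩
    · exact Or.inl (eq_of_mem_ball_of_notMem_nonIsolated hx hy)
  · obtain ⟨s, hs⟩ := W.2.exists_forall_mem_ball hB
    exact ⟨s, fun x y hy => hs x y hy⟩

lemma compl_singleton_subset_ballSet_iff (hB : IsBalleanBall B) {x y : X} {r : P} :
    ({x}ᶜ : Set X) ⊆ ballSet B {y}ᶜ r ↔ x = y ∨ y ∈ nonIsolated B r := by
  refine ⟨fun h => or_iff_not_imp_left.2 fun hxy => ?_, fun h z hz => ?_⟩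
  · obtain ⟨v, hv, hyv⟩ := mem_ballSet_iff.1 (h (Ne.symm hxy : y ≠ x))
    exact (mem_nonIsolated_iff hB).2 ⟨v, hB.mem_ball_comm.1 hyv, hv⟩
  · by_cases hzy : z = y
    · subst hzy
      obtain ⟨v, hv, hne⟩ := (mem_nonIsolated_iff hB).1 (h.resolve_left (Ne.symm hz))
      exact mem_ballSet_iff.2 ⟨v, hne, hB.mem_ball_comm.1 hv⟩
    · exact mem_ballSet_iff.2 ⟨z, hzy, hB.mem_ball_self z r⟩

lemma compl_singleton_mem_expBall_iff (hB : IsBalleanBall B) {x y : X} {r : P} :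
    ({y}ᶜ : Set X) ∈ expBall B {x}ᶜ r ↔
      y = x ∨ (y ∈ nonIsolated B r ∧ x ∈ nonIsolated B r) := by
  change _ ∧ _ ↔ _
  rw [compl_singleton_subset_ballSet_iff hB, compl_singleton_subset_ballSet_iff hB]
  rcases eq_or_ne y x with rfl | hne
  · simp
  · simp [hne, hne.symm, and_comm]

lemma isAsymorphism_compl_singleton_iff (hB : IsBalleanBall B) :
    IsAsymorphism B (subBall (expBall B) (range fun x : X => ({x}ᶜ : Set X)))
        (fun x : X => ⟨({x}ᶜ : Set X), ⟨x, rfl⟩⟩) ↔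
      ∀ r, IsBoundedSet B (nonIsolated B r) := by
  refine ⟨fun h s => ?_,
    fun h => ⟨⟨fun a b hab => ?_, ?_⟩, fun r => ⟨r, ?_⟩, fun s => ?_⟩⟩
  · obtain ⟨r, hr⟩ := h.2.2 s
    exact Or.inr ⟨r, fun x hx z hz =>
      hr x ((compl_singleton_mem_expBall_iff hB).2 (Or.inr ⟨hz, hx⟩))⟩
  · exact singleton_injective (compl_injective (congrArg Subtype.val hab))
  · rintro ⟨_, x, rfl⟩
    exact ⟨x, rfl⟩
  · rintro x _ ⟨z, hz, rfl⟩
    refine (compl_singleton_mem_expBall_iff hB).2 (or_iff_not_imp_left.2 fun hzx => ?_)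
    exact ⟨(mem_nonIsolated_iff hB).2 ⟨x, hB.mem_ball_comm.1 hz, Ne.symm hzx⟩,
      (mem_nonIsolated_iff hB).2 ⟨z, hz, hzx⟩⟩
  · obtain ⟨r, hr⟩ := (h s).exists_forall_mem_ball hB
    exact ⟨r, fun x z hz => hr x z ((compl_singleton_mem_expBall_iff hB).1 hz)⟩

lemma isSlowlyOscillating_of_isBoundedSet_nonIsolated
    (h : ∀ r, IsBoundedSet B (nonIsolated B r)) (f : X → Bool) :
    IsSlowlyOscillating B f := fun r =>
  ⟨_, h r, fun _ hx _ hy _ hz => by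
    rw [eq_of_mem_ball_of_notMem_nonIsolated hx hy, eq_of_mem_ball_of_notMem_nonIsolated hx hz]⟩

lemma isBoundedSet_of_not_isThickSet_of_isSlowlyOscillating (hB : IsBalleanBall B) {A : Set X}
    [DecidablePred (· ∈ A)] (hf : IsSlowlyOscillating B fun x => decide (x ∈ A))
    (hA : ¬ IsThickSet B A) : IsBoundedSet B A := by
  simp only [IsThickSet, not_forall, not_exists, not_and] at hA
  obtain ⟨r, hr⟩ := hA
  obtain ⟨V, hV, hfV⟩ := hf r
  refine hV.mono fun x hx => ?_
  by_contra hxV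
  exact hr x hx fun y hy => by simpa [hx] using hfV x hxV y hy x (hB.mem_ball_self x r)

lemma not_isThickSet_singleton (hB : IsBalleanBall B) (hconn : IsConnectedBall B)
    (hunb : ¬ IsBoundedSet B univ) (x : X) : ¬ IsThickSet B {x} := by
  intro h
  obtain ⟨r⟩ := hB.1
  refine hunb (isBoundedSet_of_subset_ball hB (x := x) (r := r) fun z _ => ?_)
  obtain ⟨s, hs⟩ := hconn x z
  obtain ⟨_, rfl, hsub⟩ := h s
  rw [mem_singleton_iff.1 (hsub hs)]
  exact hB.mem_ball_self _ r

lemma isBoundedSet_of_not_isThickSet_of_isConnectedBall (hB : IsBalleanBall B)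
    (hconn : IsConnectedBall B) (hunb : ¬ IsBoundedSet B univ)
    (h : IsConnectedBall (subBall (expBall B) {A : Set X | A.Nonempty ∧ ¬ IsThickSet B A}))
    {A : Set X} (hA : ¬ IsThickSet B A) : IsBoundedSet B A := by
  rcases A.eq_empty_or_nonempty with rfl | ⟨a, ha⟩
  · exact Or.inl rfl
  have ha_mem : ({a} : Set X) ∈ {A : Set X | A.Nonempty ∧ ¬ IsThickSet B A} :=
    ⟨singleton_nonempty a, not_isThickSet_singleton hB hconn hunb a⟩
  obtain ⟨t, -, hAt⟩ := h ⟨{a}, ha_mem⟩ ⟨A, ⟨a, ha⟩, hA⟩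
  exact isBoundedSet_of_subset_ball hB (ballSet_singleton (B := B) a t ▸ hAt)

end Ballean

/-- Characterisation of thin connected unbounded balleans: thinness is equivalent to
(ii) coinciding (via `id`) with the satellite point ideal ballean of the ideal of bounded sets,
(iii) every non-thick subset being bounded, (iv) connectedness of the subballean of `exp B`
on the nonempty non-thick subsets, (v) `C : x ↦ X \ {x}` being injective and an asymorphism
onto its image, and (vi) every `f : X → {0,1}` being slowly oscillating. -/
theorem stmt2 {X : Type u} {P : Type v} (B : X → P → Set X) (hB : IsBalleanBall B)
    (hconn : IsConnectedBall B) (hunb : ¬ IsBoundedSet B Set.univ) :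
    List.TFAE [
      IsThinSet B Set.univ,
      IsAsymorphism B (pointIdealBall {V : Set X | IsBoundedSet B V}) (id : X → X),
      ∀ A : Set X, ¬ IsThickSet B A → IsBoundedSet B A,
      IsConnectedBall (subBall (expBall B) {A : Set X | A.Nonempty ∧ ¬ IsThickSet B A}),
      Function.Injective (fun x : X => ({x}ᶜ : Set X)) ∧
        IsAsymorphism B (subBall (expBall B) (Set.range fun x : X => ({x}ᶜ : Set X)))
          (fun x : X => ⟨({x}ᶜ : Set X), ⟨x, rfl⟩⟩),
      ∀ f : X → Bool, IsSlowlyOscillating B f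
    ] := by
  have hthin := isThinSet_univ_iff (B := B)
  tfae_have 1 ↔ 2 := hthin.trans (isAsymorphism_id_pointIdealBall_iff hB).symm
  tfae_have 1 → 3 := fun h A => isBoundedSet_of_not_isThickSet hB (hthin.1 h)
  tfae_have 3 → 1 := fun h =>
    hthin.2 (isBoundedSet_nonIsolated_of_forall_not_isThickSet hB h)
  tfae_have 3 → 4 := by
    rintro h ⟨A, hAne, hA⟩ ⟨C, hCne, hC⟩
    exact exists_mem_expBall_of_isBoundedSet hB hconn (h A hA) (h C hC) hAne hCne
  tfae_have 4 → 3 := fun h A => isBoundedSet_of_not_isThickSet_of_isConnectedBall hB hconn hunb h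
  tfae_have 1 ↔ 5 := hthin.trans <| (isAsymorphism_compl_singleton_iff hB).symm.trans
    (and_iff_right (compl_injective.comp singleton_injective)).symm
  tfae_have 1 → 6 := fun h => isSlowlyOscillating_of_isBoundedSet_nonIsolated (hthin.1 h)
  tfae_have 6 → 3 := fun h A => by
    classical exact isBoundedSet_of_not_isThickSet_of_isSlowlyOscillating hB (h _)
  tfae_finish
end

section
/- Let (X,P_X,B_X) and (Y,P_Y,B_Y) be balleans and f : X → Y a map. Then the following are equivalent: (a) f is coarse; (b) the map exp f : 𝒫(X) → 𝒫(Y) sending A to its image f(A) is coarse as a map from exp(B_X) to exp(B_Y); (c) f maps every nonempty bounded subset of X to a bounded subset of Y, and the induced map f^♭ : X^♭ → Y^♭, A ↦ f(A), is coarse. -/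
open Set Cardinal

universe u v

variable {X : Type*} {Y : Type*} {P : Type*} {Q : Type*}

/-- A map `f` between balleans is coarse iff `exp f = Set.image f` is coarse between the
hyperballeans, iff `f` sends nonempty bounded sets to bounded sets and the induced map
`f^♭ : X^♭ → Y^♭` is coarse. -/
theorem stmt3 {X : Type u} {Y : Type v} {P Q : Type*} (BX : X → P → Set X) (BY : Y → Q → Set Y)
    (hBX : IsBalleanBall BX) (hBY : IsBalleanBall BY) (f : X → Y) :
    List.TFAE [
      IsCoarse BX BY f,
      IsCoarse (expBall BX) (expBall BY) (Set.image f),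
      ∃ h : ∀ A : Set X, A.Nonempty → IsBoundedSet BX A → IsBoundedSet BY (f '' A),
        IsCoarse (subBall (expBall BX) (flatSupport BX)) (subBall (expBall BY) (flatSupport BY))
          (fun A : flatSupport BX => ⟨f '' (A : Set X), A.2.1.image f, h _ A.2.1 A.2.2⟩)
    ] := by
  obtain ⟨⟨p0⟩, hXrefl, hXsym, _⟩ := hBX
  obtain ⟨⟨q0⟩, hYrefl, hYsym, _⟩ := hBY
  have key : ∀ (hf : IsCoarse BX BY f) (r : P), ∃ s : Q, ∀ A C : Set X,
      C ∈ expBall BX A r → f '' C ∈ expBall BY (f '' A) s := by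
    intro hf r
    obtain ⟨s, hs⟩ := hf r
    refine ⟨s, fun A C hC => ⟨?_, ?_⟩⟩
    · rintro _ ⟨a, ha, rfl⟩
      obtain ⟨x, hx, hax⟩ := Set.mem_iUnion₂.1 (hC.1 ha)
      exact Set.mem_iUnion₂.2 ⟨f x, ⟨x, hx, rfl⟩, hs x ⟨a, hax, rfl⟩⟩
    · rintro _ ⟨c, hc, rfl⟩
      obtain ⟨x, hx, hcx⟩ := Set.mem_iUnion₂.1 (hC.2 hc)
      exact Set.mem_iUnion₂.2 ⟨f x, ⟨x, hx, rfl⟩, hs x ⟨c, hcx, rfl⟩⟩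
  have singmem : ∀ x y : X, ∀ r : P, y ∈ BX x r → ({y} : Set X) ∈ expBall BX {x} r := by
    intro x y r hy
    constructor
    · rintro a rfl
      exact Set.mem_iUnion₂.2 ⟨y, rfl, (hXsym _ _ r).2 hy⟩
    · rintro a rfl
      exact Set.mem_iUnion₂.2 ⟨_, rfl, hy⟩
  have extract : ∀ (x y : Y) (s : Q), ({y} : Set Y) ∈ expBall BY {x} s → y ∈ BY x s := by
    rintro x y s ⟨_, h2⟩
    obtain ⟨z, hz, hyz⟩ := Set.mem_iUnion₂.1 (h2 rfl)
    rw [Set.mem_singleton_iff] at hz; subst hz; exact hyz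
  have singbdd : ∀ x : X, ({x} : Set X) ∈ flatSupport BX := by
    intro x
    refine ⟨Set.singleton_nonempty x, Or.inr ⟨p0, ?_⟩⟩
    rintro z rfl w rfl
    exact hXrefl _ p0
  tfae_have 1 → 2
  | hf => by
    intro r
    obtain ⟨s, hs⟩ := key hf r
    refine ⟨s, fun A => ?_⟩
    rintro _ ⟨C, hC, rfl⟩
    exact hs A C hC
  tfae_have 2 → 1
  | hf => by
    intro r
    obtain ⟨s, hs⟩ := hf r
    refine ⟨s, fun x => ?_⟩
    rintro _ ⟨y, hy, rfl⟩
    have h := hs {x} ⟨{y}, singmem x y r hy, rfl⟩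
    rw [Set.image_singleton, Set.image_singleton] at h
    exact extract _ _ s h
  tfae_have 1 → 3
  | hf => by
    have hb : ∀ A : Set X, A.Nonempty → IsBoundedSet BX A → IsBoundedSet BY (f '' A) := by
      intro A hA hAb
      rcases hAb with hE | ⟨r, hr⟩
      · exact absurd hE hA.ne_empty
      obtain ⟨s, hs⟩ := hf r
      refine Or.inr ⟨s, ?_⟩
      rintro _ ⟨y, hy, rfl⟩ _ ⟨z, hz, rfl⟩
      exact hs y ⟨z, hr y hy hz, rfl⟩
    refine ⟨hb, fun r => ?_⟩
    obtain ⟨s, hs⟩ := key hf r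
    refine ⟨s, fun A => ?_⟩
    rintro _ ⟨C, hC, rfl⟩
    exact hs A C hC
  tfae_have 3 → 1
  | ⟨hb, hf⟩ => by
    intro r
    obtain ⟨s, hs⟩ := hf r
    refine ⟨s, fun x => ?_⟩
    rintro _ ⟨y, hy, rfl⟩
    have hmem : (⟨{y}, singbdd y⟩ : flatSupport BX) ∈
        subBall (expBall BX) (flatSupport BX) ⟨{x}, singbdd x⟩ r :=
      singmem x y r hy
    have h := hs ⟨{x}, singbdd x⟩ ⟨⟨{y}, singbdd y⟩, hmem, rfl⟩
    simp only [subBall, Set.mem_setOf_eq, Set.image_singleton] at h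
    exact extract _ _ s h
  tfae_finish
end

section
/- Let (X,P_X,B_X) and (Y,P_Y,B_Y) be balleans and f : X → Y a map. Then the following are equivalent: (a) f is a coarse embedding; (b) the map exp f : 𝒫(X) → 𝒫(Y) sending A to its image f(A) is a coarse embedding from exp(B_X) to exp(B_Y); (c) f maps every nonempty bounded subset of X to a bounded subset of Y, and the induced map f^♭ : X^♭ → Y^♭, A ↦ f(A), is a coarse embedding. -/
open Set Cardinal

universe u v

variable {X : Type*} {Y : Type*} {P : Type*} {Q : Type*}

lemma mem_ballSet' {B : X → P → Set X} {A : Set X} {r : P} {x : X} :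
    x ∈ ballSet B A r ↔ ∃ a ∈ A, x ∈ B a r := by simp [ballSet]

lemma coarse_image_exp {BX : X → P → Set X} {BY : Y → Q → Set Y} {f : X → Y}
    (hc : IsCoarse BX BY f) (r : P) :
    ∃ s, ∀ A C : Set X, C ∈ expBall BX A r → f '' C ∈ expBall BY (f '' A) s := by
  obtain ⟨s, hs⟩ := hc r
  refine ⟨s, fun A C hC => ⟨?_, ?_⟩⟩
  · rintro _ ⟨a, ha, rfl⟩
    obtain ⟨c, hc', hac⟩ := mem_ballSet'.1 (hC.1 ha)
    exact mem_ballSet'.2 ⟨f c, ⟨c, hc', rfl⟩, hs c ⟨a, hac, rfl⟩⟩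
  · rintro _ ⟨c, hcC, rfl⟩
    obtain ⟨a, ha, hca⟩ := mem_ballSet'.1 (hC.2 hcC)
    exact mem_ballSet'.2 ⟨f a, ⟨a, ha, rfl⟩, hs a ⟨c, hca, rfl⟩⟩

lemma proper_image_exp {BX : X → P → Set X} {BY : Y → Q → Set Y} {f : X → Y}
    (hp : IsEffectivelyProper BX BY f) (s : Q) :
    ∃ r, ∀ A C : Set X, f '' C ∈ expBall BY (f '' A) s → C ∈ expBall BX A r := by
  obtain ⟨r, hr⟩ := hp s
  refine ⟨r, fun A C hC => ⟨?_, ?_⟩⟩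
  · intro a ha
    obtain ⟨_, ⟨c, hcC, rfl⟩, hfa⟩ := mem_ballSet'.1 (hC.1 ⟨a, ha, rfl⟩)
    exact mem_ballSet'.2 ⟨c, hcC, hr c hfa⟩
  · intro c hcC
    obtain ⟨_, ⟨a, ha, rfl⟩, hfc⟩ := mem_ballSet'.1 (hC.2 ⟨c, hcC, rfl⟩)
    exact mem_ballSet'.2 ⟨a, ha, hr a hfc⟩

lemma singleton_mem_expBall {B : X → P → Set X} (hsym : ∀ x y r, x ∈ B y r ↔ y ∈ B x r)
    {x y : X} {r : P} : ({y} : Set X) ∈ expBall B {x} r ↔ y ∈ B x r := by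
  have h1 : ballSet B {x} r = B x r := by simp [ballSet]
  have h2 : ballSet B {y} r = B y r := by simp [ballSet]
  simp only [expBall, mem_setOf_eq, h1, h2, singleton_subset_iff]
  exact ⟨fun h => h.2, fun h => ⟨(hsym x y r).2 h, h⟩⟩

lemma singleton_flat {B : X → P → Set X} (hB : IsBalleanBall B) (x : X) :
    {x} ∈ flatSupport B := by
  obtain ⟨⟨r⟩, hmem, -, -⟩ := hB
  refine ⟨singleton_nonempty x, Or.inr ⟨r, fun y hy => ?_⟩⟩
  rw [mem_singleton_iff] at hy; subst hy
  exact singleton_subset_iff.2 (hmem y r)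

/-- A map `f` between balleans is a coarse embedding iff `exp f = Set.image f` is a coarse
embedding between the hyperballeans, iff `f` sends nonempty bounded sets to bounded sets and
the induced map `f^♭ : X^♭ → Y^♭` is a coarse embedding. -/
theorem stmt4 {X : Type u} {Y : Type v} {P Q : Type*} (BX : X → P → Set X) (BY : Y → Q → Set Y)
    (hBX : IsBalleanBall BX) (hBY : IsBalleanBall BY) (f : X → Y) :
    List.TFAE [
      IsCoarseEmbedding BX BY f,
      IsCoarseEmbedding (expBall BX) (expBall BY) (Set.image f),
      ∃ h : ∀ A : Set X, A.Nonempty → IsBoundedSet BX A → IsBoundedSet BY (f '' A),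
        IsCoarseEmbedding (subBall (expBall BX) (flatSupport BX))
          (subBall (expBall BY) (flatSupport BY))
          (fun A : flatSupport BX => ⟨f '' (A : Set X), A.2.1.image f, h _ A.2.1 A.2.2⟩)
    ] := by
  have hsymX := hBX.2.2.1
  have hsymY := hBY.2.2.1
  tfae_have 1 → 2 := by
    rintro ⟨hc, hp⟩
    constructor
    · intro r
      obtain ⟨s, hs⟩ := coarse_image_exp hc r
      refine ⟨s, fun A => ?_⟩
      rintro _ ⟨C, hC, rfl⟩
      exact hs A C hC
    · intro s
      obtain ⟨r, hr⟩ := proper_image_exp hp s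
      exact ⟨r, fun A C hC => hr A C hC⟩
  tfae_have 2 → 1 := by
    rintro ⟨hc, hp⟩
    constructor
    · intro r
      obtain ⟨s, hs⟩ := hc r
      refine ⟨s, fun x => ?_⟩
      rintro _ ⟨y, hy, rfl⟩
      have h1 : ({y} : Set X) ∈ expBall BX {x} r := (singleton_mem_expBall hsymX).2 hy
      have h2 := hs {x} ⟨{y}, h1, rfl⟩
      rw [image_singleton, image_singleton] at h2
      exact (singleton_mem_expBall hsymY).1 h2
    · intro s
      obtain ⟨r, hr⟩ := hp s
      refine ⟨r, fun x y hy => ?_⟩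
      have h0 : Set.image f {y} ∈ expBall BY (Set.image f {x}) s := by
        rw [image_singleton, image_singleton]
        exact (singleton_mem_expBall hsymY).2 hy
      exact (singleton_mem_expBall hsymX).1 (hr {x} h0)
  tfae_have 1 → 3 := by
    rintro ⟨hc, hp⟩
    have hbd : ∀ A : Set X, A.Nonempty → IsBoundedSet BX A → IsBoundedSet BY (f '' A) := by
      intro A _ hbA
      rcases hbA with h | ⟨r, hr⟩
      · exact Or.inl (by simp [h])
      · obtain ⟨s, hs⟩ := hc r
        refine Or.inr ⟨s, ?_⟩
        rintro _ ⟨y, hy, rfl⟩ _ ⟨a, ha, rfl⟩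
        exact hs y ⟨a, hr y hy ha, rfl⟩
    refine ⟨hbd, ?_, ?_⟩
    · intro r
      obtain ⟨s, hs⟩ := coarse_image_exp hc r
      refine ⟨s, fun A => ?_⟩
      rintro _ ⟨C, hC, rfl⟩
      exact hs A C hC
    · intro s
      obtain ⟨r, hr⟩ := proper_image_exp hp s
      exact ⟨r, fun A C hC => hr A C hC⟩
  tfae_have 3 → 1 := by
    rintro ⟨hbd, hc, hp⟩
    have sx : ∀ x : X, ({x} : Set X) ∈ flatSupport BX := singleton_flat hBX
    constructor
    · intro r
      obtain ⟨s, hs⟩ := hc r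
      refine ⟨s, fun x => ?_⟩
      rintro _ ⟨y, hy, rfl⟩
      have h1 : (⟨{y}, sx y⟩ : flatSupport BX) ∈
          subBall (expBall BX) (flatSupport BX) ⟨{x}, sx x⟩ r :=
        (singleton_mem_expBall hsymX).2 hy
      have h2 : f '' {y} ∈ expBall BY (f '' {x}) s := hs ⟨{x}, sx x⟩ ⟨⟨{y}, sx y⟩, h1, rfl⟩
      rw [image_singleton, image_singleton] at h2
      exact (singleton_mem_expBall hsymY).1 h2
    · intro s
      obtain ⟨r, hr⟩ := hp s
      refine ⟨r, fun x y hy => ?_⟩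
      have h0 : f '' {y} ∈ expBall BY (f '' {x}) s := by
        rw [image_singleton, image_singleton]
        exact (singleton_mem_expBall hsymY).2 hy
      have h1 : (⟨{y}, sx y⟩ : flatSupport BX) ∈
          subBall (expBall BX) (flatSupport BX) ⟨{x}, sx x⟩ r :=
        hr ⟨{x}, sx x⟩ h0
      exact (singleton_mem_expBall hsymX).1 h1
  tfae_finish
end

section
/- Let I be an ideal on a set X. The identity map of 𝒫(X), viewed as a map from the hyperballean exp(X_I) to the hyperballean exp(X_{I-ary}), is coarse but not effectively proper; in particular it is not an asymorphism. -/
open Set Cardinal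

universe u v

variable {X : Type*} {Y : Type*} {P : Type*} {Q : Type*}

/-- For every ideal `I` on `X`, the identity map of `𝒫(X)`, from the hyperballean `exp(X_I)`
to the hyperballean `exp(X_{I-ary})`, is coarse but not effectively proper; in particular it
is not an asymorphism. -/
theorem stmt5 {X : Type u} (I : Set (Set X)) (hI : IsIdeal I) :
    IsCoarse (expBall (pointIdealBall I)) (expBall (aryBall I)) (id : Set X → Set X) ∧
    ¬ IsEffectivelyProper (expBall (pointIdealBall I)) (expBall (aryBall I))
        (id : Set X → Set X) ∧
    ¬ IsAsymorphism (expBall (pointIdealBall I)) (expBall (aryBall I))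
        (id : Set X → Set X) := by
  have hmono : ∀ (x : X) (r : I), pointIdealBall I x r ⊆ aryBall I x r := by
    intro x r y hy
    simp only [pointIdealBall, aryBall, Set.mem_insert_iff, Set.mem_setOf_eq] at hy ⊢
    tauto
  have hBmono : ∀ (S : Set X) (r : I),
      ballSet (pointIdealBall I) S r ⊆ ballSet (aryBall I) S r := by
    intro S r w hw
    simp only [ballSet, Set.mem_iUnion] at hw ⊢
    obtain ⟨y, hy, hw⟩ := hw
    exact ⟨y, hy, hmono y r hw⟩
  have hnep : ¬ IsEffectivelyProper (expBall (pointIdealBall I)) (expBall (aryBall I))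
      (id : Set X → Set X) := by
    intro h
    have hXne : Nonempty X := by
      by_contra hx
      have : IsEmpty X := not_nonempty_iff.mp hx
      exact hI.2.2.2 (hI.2.2.1 Set.univ Set.finite_univ)
    obtain ⟨x₀⟩ := hXne
    have hs : ({x₀} : Set X) ∈ I := hI.2.2.1 {x₀} (Set.finite_singleton x₀)
    obtain ⟨r, hr⟩ := h ⟨{x₀}, hs⟩
    have hne : ((r : Set X) ∪ {x₀}) ≠ Set.univ := by
      intro heq
      exact hI.2.2.2 (heq ▸ hI.2.1 r r.2 {x₀} hs)
    obtain ⟨z, hz⟩ := (Set.ne_univ_iff_exists_notMem _).mp hne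
    have hzr : z ∉ (r : Set X) := fun h => hz (Or.inl h)
    have hzx : z ≠ x₀ := fun h => hz (Or.inr h)
    have hD : ({z, x₀} : Set X) ∈ expBall (aryBall I) {z} ⟨{x₀}, hs⟩ := by
      constructor
      · intro w hw
        simp only [Set.mem_singleton_iff] at hw
        subst hw
        simp only [ballSet, Set.mem_iUnion]
        exact ⟨w, Or.inl rfl, Or.inl rfl⟩
      · intro w hw
        simp only [ballSet, Set.mem_iUnion]
        refine ⟨z, rfl, ?_⟩
        rcases hw with h | h
        · exact Or.inl h
        · exact Or.inr h
    have hD' := hr {z} hD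
    have hx₀ : x₀ ∈ ballSet (pointIdealBall I) {z} r := hD'.2 (Or.inr rfl)
    simp only [ballSet, Set.mem_iUnion, Set.mem_singleton_iff] at hx₀
    obtain ⟨y, rfl, hmem⟩ := hx₀
    rcases hmem with h | h
    · exact hzx h.symm
    · exact hzr h.2
  refine ⟨?_, hnep, fun h => hnep h.2.2⟩
  intro r
  refine ⟨r, fun A D hD => ?_⟩
  obtain ⟨D', hD', rfl⟩ := hD
  exact ⟨hD'.1.trans (hBmono D' r), hD'.2.trans (hBmono A r)⟩
end

section
/- Let I be an ideal on a set X. The identity map of 𝒫(X), viewed as a map from the hyperballean exp(X_{I-ary}) to the ballean C(X,I), is coarse, but it is not an asymorphism: the connected component of ∅ in exp(X_{I-ary}) is {∅}, while the connected component of ∅ in C(X,I) is I; in particular the identity map from C(X,I) to exp(X_{I-ary}) is not coarse. -/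
open Set Cardinal

universe u v

variable {X : Type*} {Y : Type*} {P : Type*} {Q : Type*}

lemma mem_ballSet_ary {X : Type u} (I : Set (Set X)) (A : Set X) (r : I) (x : X) :
    x ∈ ballSet (aryBall I) A r ↔ x ∈ A ∨ (A.Nonempty ∧ x ∈ (r : Set X)) := by
  simp only [ballSet, aryBall, Set.mem_iUnion, Set.mem_insert_iff, exists_prop]
  constructor
  · rintro ⟨y, hy, h | h⟩
    · exact Or.inl (h ▸ hy)
    · exact Or.inr ⟨⟨y, hy⟩, h⟩
  · rintro (h | ⟨⟨y, hy⟩, h⟩)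
    · exact ⟨x, h, Or.inl rfl⟩
    · exact ⟨y, hy, Or.inr h⟩

lemma expBall_empty {X : Type u} (I : Set (Set X)) (r : I) (C : Set X)
    (hC : C ∈ expBall (aryBall I) ∅ r) : C = ∅ := by
  obtain ⟨-, h2⟩ := hC
  apply Set.eq_empty_of_subset_empty
  intro x hx
  rcases (mem_ballSet_ary I ∅ r x).1 (h2 hx) with h | ⟨⟨y, hy⟩, -⟩
  · exact h
  · exact hy

lemma mem_expBall_symmDiff {X : Type u} (I : Set (Set X)) (r : I) (A C : Set X)
    (hC : C ∈ expBall (aryBall I) A r) : symmDiff A C ⊆ (r : Set X) := by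
  obtain ⟨h1, h2⟩ := hC
  intro x hx
  rw [Set.mem_symmDiff] at hx
  rcases hx with ⟨hxA, hxC⟩ | ⟨hxC, hxA⟩
  · rcases (mem_ballSet_ary I C r x).1 (h1 hxA) with h | ⟨-, h⟩
    · exact absurd h hxC
    · exact h
  · rcases (mem_ballSet_ary I A r x).1 (h2 hxC) with h | ⟨-, h⟩
    · exact absurd h hxA
    · exact h

/-- For every ideal `I` on `X`, the identity map of `𝒫(X)`, from the hyperballean
`exp(X_{I-ary})` to the ballean `C(X,I)`, is coarse but not an asymorphism: the connected
component of `∅` in `exp(X_{I-ary})` is `{∅}` while the connected component of `∅` in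
`C(X,I)` is `I`; in particular the identity map from `C(X,I)` to `exp(X_{I-ary})` is not
coarse. -/
theorem stmt6 {X : Type u} (I : Set (Set X)) (hI : IsIdeal I) :
    IsCoarse (expBall (aryBall I)) (cBall I) (id : Set X → Set X) ∧
    ¬ IsAsymorphism (expBall (aryBall I)) (cBall I) (id : Set X → Set X) ∧
    balleanComponent (expBall (aryBall I)) ∅ = {∅} ∧
    balleanComponent (cBall I) ∅ = I ∧
    ¬ IsCoarse (cBall I) (expBall (aryBall I)) (id : Set X → Set X) := by
  obtain ⟨hdown, hunion, hfin, huniv⟩ := hI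
  have hempty : (∅ : Set X) ∈ I := hfin ∅ Set.finite_empty
  have hXne : Nonempty X := by
    by_contra h
    apply huniv
    rw [Set.univ_eq_empty_iff.2 (not_nonempty_iff.1 h)]
    exact hempty
  obtain ⟨x0⟩ := hXne
  have hx0 : ({x0} : Set X) ∈ I := hfin {x0} (Set.finite_singleton x0)
  -- the key counterexample: {x0} is in every C-ball of ∅ with radius {x0},
  -- but the only set in any exp-ball of ∅ is ∅.
  have hnotEP : ¬ IsEffectivelyProper (expBall (aryBall I)) (cBall I) (id : Set X → Set X) := by
    intro hEP
    obtain ⟨r, hr⟩ := hEP ⟨{x0}, hx0⟩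
    have : ({x0} : Set X) ∈ expBall (aryBall I) ∅ r := by
      apply hr ∅
      show symmDiff (∅ : Set X) {x0} ⊆ {x0}
      simp [Set.symmDiff_def]
    have := expBall_empty I r {x0} this
    exact (Set.singleton_ne_empty x0) this
  refine ⟨?_, ?_, ?_, ?_, ?_⟩
  · intro r
    refine ⟨r, fun A C hC => ?_⟩
    simp only [Set.image_id] at hC
    exact mem_expBall_symmDiff I r A C hC
  · rintro ⟨-, -, hEP⟩
    exact hnotEP hEP
  · ext C
    simp only [balleanComponent, Set.mem_setOf_eq, Set.mem_singleton_iff]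
    constructor
    · rintro ⟨r, hr⟩
      exact expBall_empty I r C hr
    · rintro rfl
      refine ⟨⟨∅, hempty⟩, Set.empty_subset _, Set.empty_subset _⟩
  · ext W
    simp only [balleanComponent, Set.mem_setOf_eq]
    constructor
    · rintro ⟨K, hK⟩
      have hW : W ⊆ (K : Set X) := by
        intro x hx
        apply hK
        rw [Set.mem_symmDiff]
        exact Or.inr ⟨hx, Set.notMem_empty x⟩
      exact hdown K K.2 W hW
    · intro hW
      refine ⟨⟨W, hW⟩, ?_⟩
      show symmDiff (∅ : Set X) W ⊆ W
      simp [Set.symmDiff_def]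
  · intro hc
    obtain ⟨r, hr⟩ := hc ⟨{x0}, hx0⟩
    have h1 : ({x0} : Set X) ∈ (id : Set X → Set X) '' cBall I ∅ ⟨{x0}, hx0⟩ := by
      refine ⟨{x0}, ?_, rfl⟩
      show symmDiff (∅ : Set X) {x0} ⊆ {x0}
      simp [Set.symmDiff_def]
    have := hr ∅ h1
    simp only [id] at this
    exact (Set.singleton_ne_empty x0) (expBall_empty I r {x0} this)
end

section
/- Let I be an ideal on a set X, x ∈ X, and U_x = {A ⊆ X : x ∈ A}. Then the identity map of U_x is an asymorphism between the subballean of exp(X_I) on U_x and the subballean of exp(X_{I-ary}) on U_x. -/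
open Set Cardinal

universe u v

variable {X : Type*} {Y : Type*} {P : Type*} {Q : Type*}

lemma point_subset_ary {X : Type u} (I : Set (Set X)) (y : X) (K : I) :
    pointIdealBall I y K ⊆ aryBall I y K := by
  intro z hz
  rcases hz with h | ⟨h, _⟩
  · exact Or.inl h
  · exact Or.inr h

lemma ballSet_point_subset_ary {X : Type u} (I : Set (Set X)) (C : Set X) (K : I) :
    ballSet (pointIdealBall I) C K ⊆ ballSet (aryBall I) C K := by
  intro z hz
  simp only [ballSet, mem_iUnion] at hz ⊢
  obtain ⟨y, hy, hz⟩ := hz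
  exact ⟨y, hy, point_subset_ary I y K hz⟩

lemma ballSet_ary_subset {X : Type u} (I : Set (Set X)) (C : Set X) (K : I) :
    ballSet (aryBall I) C K ⊆ C ∪ (K : Set X) := by
  intro z hz
  simp only [ballSet, mem_iUnion] at hz
  obtain ⟨y, hy, hz⟩ := hz
  rcases hz with h | h
  · exact Or.inl (h ▸ hy)
  · exact Or.inr h

lemma subset_ballSet_point {X : Type u} (I : Set (Set X)) {x : X} (C : Set X) (K : I)
    (hxC : x ∈ C) (hxK : x ∈ (K : Set X)) :
    C ∪ (K : Set X) ⊆ ballSet (pointIdealBall I) C K := by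
  intro z hz
  simp only [ballSet, mem_iUnion]
  rcases hz with h | h
  · exact ⟨z, h, Or.inl rfl⟩
  · exact ⟨x, hxC, Or.inr ⟨h, hxK⟩⟩

/-- For every ideal `I` on `X` and `x ∈ X`, the identity map of `U_x = {A ⊆ X : x ∈ A}` is an
asymorphism between the subballean of `exp(X_I)` on `U_x` and the subballean of
`exp(X_{I-ary})` on `U_x`. -/
theorem stmt7 {X : Type u} (I : Set (Set X)) (hI : IsIdeal I) (x : X) :
    IsAsymorphism (subBall (expBall (pointIdealBall I)) {A : Set X | x ∈ A})
      (subBall (expBall (aryBall I)) {A : Set X | x ∈ A})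
      (id : {A : Set X | x ∈ A} → {A : Set X | x ∈ A}) := by
  obtain ⟨hdown, hunion, hfin, huniv⟩ := hI
  refine ⟨Function.bijective_id, ?_, ?_⟩
  · intro r
    refine ⟨r, ?_⟩
    rintro ⟨A, hA⟩ C hC
    simp only [image_id] at hC
    obtain ⟨h1, h2⟩ : (C : Set X) ∈ expBall (pointIdealBall I) A r := hC
    exact ⟨h1.trans (ballSet_point_subset_ary I C r),
      h2.trans (ballSet_point_subset_ary I A r)⟩
  · intro s
    have hxK : ({x} : Set X) ∈ I := hfin {x} (finite_singleton x)
    refine ⟨⟨(s : Set X) ∪ {x}, hunion _ s.2 _ hxK⟩, ?_⟩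
    rintro ⟨A, hA⟩ ⟨C, hC⟩ hmem
    simp only [mem_preimage, id_eq] at hmem
    obtain ⟨h1, h2⟩ := hmem
    have hxr : x ∈ ((⟨(s : Set X) ∪ {x}, hunion _ s.2 _ hxK⟩ : I) : Set X) := Or.inr rfl
    constructor
    · refine subset_trans ?_ (subset_ballSet_point I C _ hC hxr)
      exact (h1.trans (ballSet_ary_subset I C s)).trans
        (union_subset_union_right C (subset_union_left))
    · refine subset_trans ?_ (subset_ballSet_point I A _ hA hxr)
      exact (h2.trans (ballSet_ary_subset I A s)).trans
        (union_subset_union_right A (subset_union_left))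
end

section
/- Let I be an ideal on a set X, x ∈ X, and U_x = {A ⊆ X : x ∈ A}. Then the inclusion map of U_x into 𝒫(X), viewed as a map from the subballean of exp(X_I) on U_x into the ballean C(X,I), is a coarse equivalence; in particular it is a coarse embedding and U_x is a large subset of C(X,I). -/
open Set Cardinal

universe u v

variable {X : Type*} {Y : Type*} {P : Type*} {Q : Type*}

/-- For every ideal `I` on `X` and `x ∈ X`, the inclusion of `U_x = {A ⊆ X : x ∈ A}` into
`𝒫(X)`, viewed as a map from the subballean of `exp(X_I)` on `U_x` to the ballean `C(X,I)`,
is a coarse equivalence: it is a coarse embedding and its image `U_x` is large in `C(X,I)`. -/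
theorem stmt8 {X : Type u} (I : Set (Set X)) (hI : IsIdeal I) (x : X) :
    IsCoarseEmbedding (subBall (expBall (pointIdealBall I)) {A : Set X | x ∈ A}) (cBall I)
      (fun A : {A : Set X | x ∈ A} => (A : Set X)) ∧
    IsLargeSet (cBall I) (Set.range (fun A : {A : Set X | x ∈ A} => (A : Set X))) := by

  obtain ⟨hdown, hunion, hfin, -⟩ := hI
  have hxI : ({x} : Set X) ∈ I := hfin _ (Set.finite_singleton x)
  have hball_sub : ∀ (S : Set X) (K : I),
      ballSet (pointIdealBall I) S K ⊆ S ∪ (K : Set X) := by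
    intro S K z hz
    simp only [ballSet, Set.mem_iUnion, pointIdealBall, Set.mem_insert_iff,
      Set.mem_setOf_eq] at hz
    obtain ⟨y, hy, hz⟩ := hz
    rcases hz with rfl | hz
    · exact Or.inl hy
    · exact Or.inr hz.1
  have hball_sup : ∀ (S : Set X) (K : I), x ∈ S → x ∈ (K : Set X) →
      S ∪ (K : Set X) ⊆ ballSet (pointIdealBall I) S K := by
    intro S K hxS hxK z hz
    simp only [ballSet, Set.mem_iUnion, pointIdealBall, Set.mem_insert_iff,
      Set.mem_setOf_eq]
    rcases hz with hz | hz
    · exact ⟨z, hz, Or.inl rfl⟩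
    · exact ⟨x, hxS, Or.inr ⟨hz, hxK⟩⟩
  refine ⟨⟨?_, ?_⟩, ?_⟩
  · -- coarse
    intro r
    refine ⟨r, ?_⟩
    rintro ⟨A, hA⟩ y ⟨⟨C, hC⟩, hCmem, rfl⟩
    simp only [subBall, expBall, Set.mem_setOf_eq] at hCmem
    obtain ⟨h1, h2⟩ := hCmem
    intro z hz
    rcases Set.mem_symmDiff.mp hz with ⟨hzA, hzC⟩ | ⟨hzC, hzA⟩
    · rcases hball_sub C r (h1 hzA) with h | h
      · exact absurd h hzC
      · exact h
    · rcases hball_sub A r (h2 hzC) with h | h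
      · exact absurd h hzA
      · exact h
  · -- effectively proper
    intro s
    have hK : ((s : Set X) ∪ {x} : Set X) ∈ I := hunion _ s.2 _ hxI
    refine ⟨⟨(s : Set X) ∪ {x}, hK⟩, ?_⟩
    rintro ⟨A, hA⟩ ⟨C, hC⟩ hmem
    simp only [Set.mem_preimage, cBall, Set.mem_setOf_eq] at hmem
    have hA' : x ∈ A := hA
    have hC' : x ∈ C := hC
    have hxK : x ∈ ((s : Set X) ∪ {x}) := Or.inr rfl
    simp only [subBall, expBall, Set.mem_setOf_eq]
    constructor
    · intro z hz
      refine hball_sup C ⟨(s : Set X) ∪ {x}, hK⟩ hC' hxK ?_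
      by_cases hzC : z ∈ C
      · exact Or.inl hzC
      · exact Or.inr (Or.inl (hmem (Set.mem_symmDiff.mpr (Or.inl ⟨hz, hzC⟩))))
    · intro z hz
      refine hball_sup A ⟨(s : Set X) ∪ {x}, hK⟩ hA' hxK ?_
      by_cases hzA : z ∈ A
      · exact Or.inl hzA
      · exact Or.inr (Or.inl (hmem (Set.mem_symmDiff.mpr (Or.inr ⟨hz, hzA⟩))))
  · -- large
    refine ⟨⟨{x}, hxI⟩, ?_⟩
    ext W
    simp only [ballSet, Set.mem_iUnion, Set.mem_univ, iff_true]
    refine ⟨insert x W, ⟨⟨insert x W, Set.mem_insert _ _⟩, rfl⟩, ?_⟩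
    intro z hz
    rcases Set.mem_symmDiff.mp hz with ⟨hz1, hz2⟩ | ⟨hz1, hz2⟩
    · rcases hz1 with rfl | hz1
      · exact rfl
      · exact absurd hz1 hz2
    · exact absurd (Set.mem_insert_of_mem _ hz1) hz2
end

section
/- Let I be an ideal on a set X, x ∈ X, and I_x = {F ∈ I : x ∈ F}. Then the identity map of I_x is an asymorphism between the subballean of X_I^♭ on I_x and the subballean of X_{I-ary}^♭ on I_x. -/
open Set Cardinal

universe u v

variable {X : Type*} {Y : Type*} {P : Type*} {Q : Type*}

lemma ballSet_mono' {B B' : X → P → Set X} (h : ∀ y r, B y r ⊆ B' y r)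
    (A : Set X) (r : P) : ballSet B A r ⊆ ballSet B' A r := by
  intro z hz
  simp only [ballSet, Set.mem_iUnion] at hz ⊢
  obtain ⟨y, hy, hzy⟩ := hz
  exact ⟨y, hy, h y r hzy⟩

/-- For every ideal `I` on `X` and `x ∈ X`, the identity map of `I_x = {F ∈ I : x ∈ F}` is an
asymorphism between the subballean of `X_I^♭` on `I_x` and the subballean of `X_{I-ary}^♭`
on `I_x` (equivalently, between the corresponding subballeans of the hyperballeans). -/
theorem stmt9 {X : Type u} (I : Set (Set X)) (hI : IsIdeal I) (x : X) :
    IsAsymorphism (subBall (expBall (pointIdealBall I)) {F : Set X | F ∈ I ∧ x ∈ F})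
      (subBall (expBall (aryBall I)) {F : Set X | F ∈ I ∧ x ∈ F})
      (id : {F : Set X | F ∈ I ∧ x ∈ F} → {F : Set X | F ∈ I ∧ x ∈ F}) := by
  obtain ⟨hsub, hunion, hfin, -⟩ := hI
  have hmono : ∀ (y : X) (r : I), pointIdealBall I y r ⊆ aryBall I y r := by
    rintro y r z (rfl | ⟨hz, -⟩)
    · exact Set.mem_insert _ _
    · exact Set.mem_insert_of_mem _ hz
  refine ⟨Function.bijective_id, ?_, ?_⟩
  · intro r
    refine ⟨r, ?_⟩
    rintro F C ⟨D, ⟨h1, h2⟩, rfl⟩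
    exact ⟨(h1.trans (ballSet_mono' hmono _ _)), (h2.trans (ballSet_mono' hmono _ _))⟩
  · intro s
    have hr : (↑s ∪ {x} : Set X) ∈ I :=
      hunion _ s.2 _ (hfin _ (Set.finite_singleton x))
    refine ⟨⟨↑s ∪ {x}, hr⟩, ?_⟩
    intro F C hC
    obtain ⟨h1, h2⟩ := hC
    have key : ∀ A : Set X, x ∈ A →
        ballSet (aryBall I) A s ⊆ ballSet (pointIdealBall I) A ⟨↑s ∪ {x}, hr⟩ := by
      intro A hxA z hz
      simp only [ballSet, Set.mem_iUnion] at hz ⊢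
      obtain ⟨y, hy, hzy⟩ := hz
      rcases hzy with rfl | hzs
      · exact ⟨z, hy, Set.mem_insert _ _⟩
      · exact ⟨x, hxA, Set.mem_insert_of_mem _
          ⟨Set.mem_union_left _ hzs, Set.mem_union_right _ rfl⟩⟩
    exact ⟨h1.trans (key _ C.2.2), h2.trans (key _ F.2.2)⟩
end

section
/- Let I be an ideal on a set X, x ∈ X, and I_x = {F ∈ I : x ∈ F}. Then the inclusion map of I_x into I, viewed as a map from the subballean of X_I^♭ on I_x into the I-macrocube K(X,I), is a coarse equivalence; in particular it is a coarse embedding and I_x is a large subset of K(X,I). -/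
open Set Cardinal

universe u v

variable {X : Type*} {Y : Type*} {P : Type*} {Q : Type*}

/-- For every ideal `I` on `X` and `x ∈ X`, the inclusion of `I_x = {F ∈ I : x ∈ F}` into `I`,
viewed as a map from the subballean of `X_I^♭` on `I_x` to the `I`-macrocube `K(X,I)` (the
subballean of `C(X,I)` on `I`), is a coarse equivalence: it is a coarse embedding and its
image is large in `K(X,I)`. -/
theorem stmt10 {X : Type u} (I : Set (Set X)) (hI : IsIdeal I) (x : X) :
    IsCoarseEmbedding (subBall (expBall (pointIdealBall I)) {F : Set X | F ∈ I ∧ x ∈ F})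
      (subBall (cBall I) I)
      (fun F : {F : Set X | F ∈ I ∧ x ∈ F} => (⟨(F : Set X), F.2.1⟩ : I)) ∧
    IsLargeSet (subBall (cBall I) I)
      (Set.range (fun F : {F : Set X | F ∈ I ∧ x ∈ F} => (⟨(F : Set X), F.2.1⟩ : I))) := by
  obtain ⟨hsub, hunion, hfin, -⟩ := hI
  have hins : ∀ Z ∈ I, insert x Z ∈ I := fun Z hZ => by
    rw [Set.insert_eq]; exact hunion _ (hfin _ (Set.finite_singleton x)) _ hZ
  refine ⟨⟨?_, ?_⟩, ?_⟩
  · -- coarse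
    intro r
    refine ⟨r, ?_⟩
    rintro F _ ⟨G, hG, rfl⟩
    obtain ⟨h1, h2⟩ := hG
    intro z hz
    rcases Set.mem_symmDiff.mp hz with ⟨hzF, hzG⟩ | ⟨hzG, hzF⟩
    · have := h1 hzF
      simp only [ballSet, Set.mem_iUnion, pointIdealBall, Set.mem_insert_iff,
        Set.mem_setOf_eq] at this
      obtain ⟨y, hyG, hy⟩ := this
      rcases hy with rfl | ⟨hzr, _⟩
      · exact absurd hyG hzG
      · exact hzr
    · have := h2 hzG
      simp only [ballSet, Set.mem_iUnion, pointIdealBall, Set.mem_insert_iff,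
        Set.mem_setOf_eq] at this
      obtain ⟨y, hyF, hy⟩ := this
      rcases hy with rfl | ⟨hzr, _⟩
      · exact absurd hyF hzF
      · exact hzr
  · -- effectively proper
    intro K
    refine ⟨⟨insert x (K : Set X), hins _ K.2⟩, ?_⟩
    intro F G hG
    have hdiff : symmDiff (F : Set X) (G : Set X) ⊆ (K : Set X) := hG
    have key : ∀ (U V : {F : Set X | F ∈ I ∧ x ∈ F}),
        (U : Set X) \ (V : Set X) ⊆ (K : Set X) →
        (U : Set X) ⊆ ballSet (pointIdealBall I) (V : Set X)
          ⟨insert x (K : Set X), hins _ K.2⟩ := by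
      intro U V hUV z hz
      simp only [ballSet, Set.mem_iUnion, pointIdealBall, Set.mem_insert_iff,
        Set.mem_setOf_eq]
      by_cases hzV : z ∈ (V : Set X)
      · exact ⟨z, hzV, Or.inl rfl⟩
      · refine ⟨x, V.2.2, Or.inr ⟨?_, Set.mem_insert x _⟩⟩
        exact Set.mem_insert_iff.mpr (Or.inr (hUV ⟨hz, hzV⟩))
    refine ⟨?_, ?_⟩
    · exact key F G (fun z hz => hdiff (Set.mem_symmDiff.mpr (Or.inl ⟨hz.1, hz.2⟩)))
    · exact key G F (fun z hz => hdiff (Set.mem_symmDiff.mpr (Or.inr ⟨hz.1, hz.2⟩)))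
  · -- large
    refine ⟨⟨{x}, hfin _ (Set.finite_singleton x)⟩, ?_⟩
    ext Z
    simp only [ballSet, Set.mem_iUnion, Set.mem_univ, iff_true]
    refine ⟨⟨insert x (Z : Set X), hins _ Z.2⟩,
      ⟨⟨⟨insert x (Z : Set X), ⟨hins _ Z.2, Set.mem_insert x _⟩⟩, rfl⟩, ?_⟩⟩
    intro z hz
    rcases Set.mem_symmDiff.mp hz with ⟨hz1, hz2⟩ | ⟨hz1, hz2⟩
    · rcases Set.mem_insert_iff.mp hz1 with rfl | h
      · exact rfl
      · exact absurd h hz2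
    · exact absurd (Set.mem_insert_iff.mpr (Or.inr hz1)) hz2
end

section
/- Let κ be an infinite cardinal, identified with the set of ordinals below κ, let K = {A ⊆ κ : |A| < κ}, and fix x < κ. Let U_{≥x} = {A ⊆ κ : A ≠ ∅ and min A = x}. Then there is a bijection from 𝒫(κ) onto U_{≥x} that is an asymorphism from the ballean C(κ,K) onto the subballean of exp(κ_K) on U_{≥x}. -/
open Set Cardinal

universe u v

variable {X : Type*} {Y : Type*} {P : Type*} {Q : Type*}

/-!
Only `< κ` ordinals lie below `x`, so there is a bijection `j` from `κ` onto the ordinals above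
`x`; send `S` to `{x} ∪ j(S)`. This is a bijection onto the sets with least element `x`, and it
carries symmetric differences to their images under `j`. As all these sets contain `x`, for a
radius `K ∋ x` the ball of the hyperballean of `κ_K` around such a set consists exactly of the
sets whose symmetric difference with it lies in `K`. Hence radii correspond via `K ↦ {x} ∪ j(K)`
and `K ↦ j⁻¹(K)`.
-/

open scoped symmDiff

section PointIdealBall

variable (I : Set (Set X))

lemma ballSet_pointIdealBall_subset (A : Set X) (K : I) :
    ballSet (pointIdealBall I) A K ⊆ A ∪ K := by
  simp only [ballSet, iUnion_subset_iff]
  rintro y hy z (rfl | ⟨hz, -⟩)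
  exacts [Or.inl hy, Or.inr hz]

lemma ballSet_pointIdealBall_eq {A : Set X} {K : I} {x : X} (hxA : x ∈ A)
    (hxK : x ∈ (K : Set X)) : ballSet (pointIdealBall I) A K = A ∪ K := by
  refine (ballSet_pointIdealBall_subset I A K).antisymm ?_
  simp only [ballSet, union_subset_iff]
  exact ⟨fun z hz => mem_biUnion hz (mem_insert z _),
    fun z hz => mem_biUnion hxA (Or.inr ⟨hz, hxK⟩)⟩

lemma symmDiff_subset_of_mem_expBall_pointIdealBall {A C : Set X} {K : I}
    (h : C ∈ expBall (pointIdealBall I) A K) : A ∆ C ⊆ K :=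
  symmDiff_le_iff.2 ⟨h.1.trans (ballSet_pointIdealBall_subset I C K),
    h.2.trans (ballSet_pointIdealBall_subset I A K)⟩

lemma mem_expBall_pointIdealBall_of_symmDiff_subset {A C : Set X} {K : I} {x : X}
    (hxA : x ∈ A) (hxC : x ∈ C) (hxK : x ∈ (K : Set X)) (h : A ∆ C ⊆ K) :
    C ∈ expBall (pointIdealBall I) A K := by
  rw [expBall, mem_ofPred_eq, ballSet_pointIdealBall_eq I hxA hxK,
    ballSet_pointIdealBall_eq I hxC hxK]
  exact symmDiff_le_iff.1 h

end PointIdealBall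

section SubBall

variable {BX : X → P → Set X} {BY : Y → Q → Set Y} {S : Set Y}

lemma isCoarse_subBall_iff {f : X → S} :
    IsCoarse BX (subBall BY S) f ↔ IsCoarse BX BY (fun x => (f x : Y)) := by
  simp only [IsCoarse, image_subset_iff]
  rfl

lemma isEffectivelyProper_subBall_iff {f : X → S} :
    IsEffectivelyProper BX (subBall BY S) f ↔ IsEffectivelyProper BX BY (fun x => (f x : Y)) :=
  Iff.rfl

end SubBall

section InsertImage

variable {α : Type*} {j : X → α} {x : α}

lemma symmDiff_insert_image (hj : j.Injective) (hx : x ∉ range j) (S W : Set X) :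
    insert x (j '' S) ∆ insert x (j '' W) = j '' (S ∆ W) := by
  have hxS : ∀ S : Set X, x ∉ j '' S := fun S hxS => hx (image_subset_range j S hxS)
  rw [image_symmDiff hj, Set.symmDiff_def, Set.symmDiff_def,
    insert_sdiff_of_mem _ (mem_insert x _), insert_sdiff_of_mem _ (mem_insert x _),
    sdiff_insert_of_notMem (hxS S), sdiff_insert_of_notMem (hxS W)]

variable (I : Set (Set X)) (J : Set (Set α))

lemma isCoarse_insert_image (hj : j.Injective) (hx : x ∉ range j)
    (hIJ : ∀ K ∈ I, insert x (j '' K) ∈ J) :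
    IsCoarse (cBall I) (expBall (pointIdealBall J)) (fun S => insert x (j '' S)) := by
  rintro ⟨K, hK⟩
  refine ⟨⟨insert x (j '' K), hIJ K hK⟩, fun S => ?_⟩
  rintro _ ⟨W, hW, rfl⟩
  refine mem_expBall_pointIdealBall_of_symmDiff_subset J (mem_insert x _) (mem_insert x _)
    (mem_insert x _) ?_
  rw [symmDiff_insert_image hj hx]
  exact (image_mono hW).trans (subset_insert x _)

lemma isEffectivelyProper_insert_image (hj : j.Injective) (hx : x ∉ range j)
    (hJI : ∀ K ∈ J, j ⁻¹' K ∈ I) :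
    IsEffectivelyProper (cBall I) (expBall (pointIdealBall J)) (fun S => insert x (j '' S)) := by
  rintro ⟨K, hK⟩
  refine ⟨⟨j ⁻¹' K, hJI K hK⟩, fun S W hW => ?_⟩
  have hSW := symmDiff_subset_of_mem_expBall_pointIdealBall J hW
  rw [symmDiff_insert_image hj hx, image_subset_iff] at hSW
  exact hSW

end InsertImage

section LeastElement

variable {α : Type*} [PartialOrder α]

lemma IsLeast.insert_inter_Ioi {A : Set α} {x : α} (h : IsLeast A x) :
    insert x (A ∩ Ioi x) = A := by
  refine (insert_subset h.1 inter_subset_left).antisymm fun y hy => ?_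
  rcases (h.2 hy).eq_or_lt with rfl | hxy
  exacts [mem_insert _ _, Or.inr ⟨hy, hxy⟩]

def insertImageIoi (x : α) (j : X → Ioi x) (S : Set X) : {A : Set α | IsLeast A x} :=
  ⟨insert x ((fun s => (j s : α)) '' S), mem_insert x _, by
    rintro _ (rfl | ⟨s, -, rfl⟩)
    exacts [le_rfl, (j s).2.le]⟩

@[simp]
lemma coe_insertImageIoi (x : α) (j : X → Ioi x) (S : Set X) :
    (insertImageIoi x j S : Set α) = insert x ((fun s => (j s : α)) '' S) :=
  rfl

lemma insertImageIoi_bijective {x : α} {j : X → Ioi x} (hj : j.Bijective) :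
    (insertImageIoi x j).Bijective := by
  have hinj : (fun s => (j s : α)).Injective := Subtype.val_injective.comp hj.1
  have hx : x ∉ range (fun s => (j s : α)) := fun ⟨s, hs⟩ => (j s).2.ne' hs
  refine ⟨fun S W hSW => ?_, fun A => ⟨(fun s => (j s : α)) ⁻¹' A, Subtype.ext ?_⟩⟩
  · have hSW' : (fun s => (j s : α)) '' (S ∆ W) = ∅ := by
      rw [← symmDiff_insert_image hinj hx, ← coe_insertImageIoi, ← coe_insertImageIoi, hSW,
        symmDiff_self, bot_eq_empty]
    exact symmDiff_eq_bot.1 (image_eq_empty.1 hSW')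
  · have hrange : range (fun s => (j s : α)) = Ioi x := by
      rw [range_comp' Subtype.val j, hj.2.range_eq, image_univ, Subtype.range_coe]
    rw [coe_insertImageIoi, image_preimage_eq_inter_range, hrange]
    exact A.2.insert_inter_Ioi

end LeastElement

lemma Cardinal.mk_Ioi_ord_toType {κ : Cardinal} (hκ : ℵ₀ ≤ κ) (x : κ.ord.ToType) :
    #(Ioi x) = κ := by
  have : Infinite κ.ord.ToType := Cardinal.infinite_iff.2 (by rwa [mk_ord_toType])
  have hIio : #(Iio x) < κ := by simpa using mk_Iio_lt x
  have hIic : #(Iic x) < #κ.ord.ToType := by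
    rw [← Iio_insert, mk_ord_toType]
    exact mk_insert_le.trans_lt (add_lt_of_lt hκ hIio (one_lt_aleph0.trans_le hκ))
  rw [← compl_Iic, mk_compl_of_infinite _ hIic, mk_ord_toType]

/-- Let `κ` be an infinite cardinal (identified with the set `κ.ord.toType` of ordinals
below `κ`), `K = {A ⊆ κ : |A| < κ}` and `x < κ`. Then there is a bijection from `𝒫(κ)` onto
`U_{≥x} = {A ⊆ κ : A ≠ ∅, min A = x}` which is an asymorphism from `C(κ,K)` onto the
subballean of `exp(κ_K)` on `U_{≥x}`. -/
theorem stmt11 (κ : Cardinal.{u}) (hκ : Cardinal.aleph0 ≤ κ) (x : κ.ord.ToType) :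
    ∃ f : Set κ.ord.ToType → {A : Set κ.ord.ToType | IsLeast A x},
      IsAsymorphism (cBall {A : Set κ.ord.ToType | #A < κ})
        (subBall (expBall (pointIdealBall {A : Set κ.ord.ToType | #A < κ}))
          {A : Set κ.ord.ToType | IsLeast A x}) f := by
  obtain ⟨e⟩ : Nonempty (κ.ord.ToType ≃ Ioi x) :=
    Cardinal.eq.1 (by rw [mk_ord_toType, mk_Ioi_ord_toType hκ x])
  have hj : (fun s => (e s : κ.ord.ToType)).Injective := Subtype.val_injective.comp e.injective
  have hx : x ∉ range (fun s => (e s : κ.ord.ToType)) := fun ⟨s, hs⟩ => (e s).2.ne' hs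
  refine ⟨insertImageIoi x e, insertImageIoi_bijective e.bijective, ?_, ?_⟩
  · rw [isCoarse_subBall_iff]
    refine isCoarse_insert_image _ _ hj hx fun K hK => ?_
    exact mk_insert_le.trans_lt
      (add_lt_of_lt hκ (mk_image_le.trans_lt hK) (one_lt_aleph0.trans_le hκ))
  · rw [isEffectivelyProper_subBall_iff]
    exact isEffectivelyProper_insert_image _ _ hj hx fun K hK =>
      (mk_preimage_of_injective _ K hj).trans_lt hK
end

section
/- Let κ be a regular infinite cardinal, identified with the set of ordinals below κ, and let K = {A ⊆ κ : |A| < κ}. Then exp(κ_K) asymorphically embeds into exp(κ_{K-ary}): there exists an injective map f : 𝒫(κ) → 𝒫(κ) that is a coarse embedding from the hyperballean exp(κ_K) into the hyperballean exp(κ_{K-ary}). -/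
open Set Cardinal

universe u v

variable {X : Type*} {Y : Type*} {P : Type*} {Q : Type*}

/-! `A ⊆ κ` is sent to a copy of `A` together with a disjoint copy of its least element, inside
`κ ⊕ κ ↪ κ`. By regularity the initial segments `Iic b` are cofinal in `K`. At radius `Iic b`,
two sets are close in `exp(κ_K)` iff they differ only inside `Iic b` and, if they differ at all,
both meet `Iic b`; for nonempty sets the second condition says that their least elements either
coincide or both lie in `Iic b`. Closeness of the encodings in `exp(κ_{K-ary})` at radius `S`
says that emptiness is preserved, that the sets differ only inside the trace of `S` on the first
copy and their least elements only inside its trace on the second copy; once both traces lie in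
`Iic b`, these are the conditions above. -/

section Balls

variable {I : Set (Set X)} {A C : Set X}

theorem nonempty_of_subset_ballSet {B : X → P → Set X} {r : P} (h : A ⊆ ballSet B C r)
    (hA : A.Nonempty) : C.Nonempty := by
  obtain ⟨x, hx⟩ := hA.mono h
  simp only [ballSet, mem_iUnion, exists_prop] at hx
  obtain ⟨y, hy, -⟩ := hx
  exact ⟨y, hy⟩

theorem mem_ballSet_aryBall {R : I} {x : X} :
    x ∈ ballSet (aryBall I) C R ↔ x ∈ C ∨ C.Nonempty ∧ x ∈ (R : Set X) := by
  simp only [ballSet, aryBall, mem_iUnion, mem_insert_iff, exists_prop]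
  constructor
  · rintro ⟨y, hy, rfl | hx⟩
    exacts [Or.inl hy, Or.inr ⟨⟨y, hy⟩, hx⟩]
  · rintro (hx | ⟨⟨y, hy⟩, hx⟩)
    exacts [⟨x, hx, Or.inl rfl⟩, ⟨y, hy, Or.inr hx⟩]

theorem mem_ballSet_pointIdealBall {R : I} {x : X} :
    x ∈ ballSet (pointIdealBall I) C R ↔ x ∈ C ∨ (C ∩ R).Nonempty ∧ x ∈ (R : Set X) := by
  simp only [ballSet, pointIdealBall, mem_iUnion, mem_insert_iff, mem_ofPred_eq, exists_prop]
  constructor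
  · rintro ⟨y, hy, rfl | ⟨hx, hyR⟩⟩
    exacts [Or.inl hy, Or.inr ⟨⟨y, hy, hyR⟩, hx⟩]
  · rintro (hx | ⟨⟨y, hy, hyR⟩, hx⟩)
    exacts [⟨x, hx, Or.inl rfl⟩, ⟨y, hy, Or.inr ⟨hx, hyR⟩⟩]

theorem subset_ballSet_aryBall_iff {R : I} :
    A ⊆ ballSet (aryBall I) C R ↔ A \ C ⊆ R ∧ (A.Nonempty → C.Nonempty) := by
  refine ⟨fun h => ⟨fun x hx => ?_, nonempty_of_subset_ballSet h⟩, fun ⟨hR, hC⟩ x hx => ?_⟩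
  · exact ((mem_ballSet_aryBall.1 (h hx.1)).resolve_left hx.2).2
  · by_cases hxC : x ∈ C
    exacts [mem_ballSet_aryBall.2 (Or.inl hxC),
      mem_ballSet_aryBall.2 (Or.inr ⟨hC ⟨x, hx⟩, hR ⟨hx, hxC⟩⟩)]

theorem subset_ballSet_pointIdealBall_iff {R : I} :
    A ⊆ ballSet (pointIdealBall I) C R ↔
      A \ C ⊆ R ∧ ((A \ C).Nonempty → (C ∩ R).Nonempty) := by
  refine ⟨fun h => ⟨fun x hx => ?_, fun ⟨x, hx⟩ => ?_⟩, fun ⟨hR, hC⟩ x hx => ?_⟩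
  · exact ((mem_ballSet_pointIdealBall.1 (h hx.1)).resolve_left hx.2).2
  · exact ((mem_ballSet_pointIdealBall.1 (h hx.1)).resolve_left hx.2).1
  · by_cases hxC : x ∈ C
    exacts [mem_ballSet_pointIdealBall.2 (Or.inl hxC),
      mem_ballSet_pointIdealBall.2 (Or.inr ⟨hC ⟨x, hx, hxC⟩, hR ⟨hx, hxC⟩⟩)]

end Balls

section LeastSet

variable [LinearOrder X] {A C : Set X} {b : X}

def leastSet (A : Set X) : Set X := {x | IsLeast A x}

theorem leastSet_subset (A : Set X) : leastSet A ⊆ A := fun _ hx => hx.1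

theorem leastSet_diff_subset_Iic (hAC : A \ C ⊆ Iic b)
    (hCA : (C \ A).Nonempty → (A ∩ Iic b).Nonempty) : leastSet A \ leastSet C ⊆ Iic b := by
  rintro x ⟨hxA, hxC⟩
  by_cases hx : x ∈ C
  · obtain ⟨y, hyC, hyx⟩ : ∃ y ∈ C, y < x := by
      simpa [leastSet, IsLeast, hx, mem_lowerBounds] using hxC
    have hyA : y ∉ A := fun hyA => (hxA.2 hyA).not_gt hyx
    obtain ⟨z, hzA, hzb⟩ := hCA ⟨y, hyC, hyA⟩
    exact (hxA.2 hzA).trans hzb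
  · exact hAC ⟨hxA.1, hx⟩

theorem inter_Iic_nonempty_of_leastSet_diff_subset [WellFoundedLT X] (hC : C.Nonempty)
    (hAC : A \ C ⊆ Iic b) (hleast : leastSet C \ leastSet A ⊆ Iic b) (hne : (A \ C).Nonempty) :
    (C ∩ Iic b).Nonempty := by
  obtain ⟨c, hcC, hmin⟩ := WellFounded.has_min wellFounded_lt C hC
  have hc : IsLeast C c := ⟨hcC, fun y hy => not_lt.1 (hmin y hy)⟩
  refine ⟨c, hcC, ?_⟩
  by_contra hcb
  obtain ⟨a, haA, haC⟩ := hne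
  have hcA : IsLeast A c := by_contra fun h => hcb (hleast ⟨hc, h⟩)
  exact hcb ((hcA.2 haA).trans (hAC ⟨haA, haC⟩))

end LeastSet

section EncodeLeast

variable [LinearOrder X] {I : Set (Set X)} {J : Set (Set Y)} {A C : Set X} {b : X}

def encodeLeast (j : X ⊕ X → Y) (A : Set X) : Set Y :=
  j '' (Sum.inl '' A ∪ Sum.inr '' leastSet A)

variable {j : X ⊕ X → Y}

theorem encodeLeast_eq (A : Set X) :
    encodeLeast j A = (j ∘ Sum.inl) '' A ∪ (j ∘ Sum.inr) '' leastSet A := by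
  rw [encodeLeast, image_union, image_comp, image_comp]

theorem preimage_inl_encodeLeast (hj : Function.Injective j) (A : Set X) :
    (j ∘ Sum.inl) ⁻¹' encodeLeast j A = A := by
  ext x
  simp [encodeLeast, hj.eq_iff]

theorem preimage_inr_encodeLeast (hj : Function.Injective j) (A : Set X) :
    (j ∘ Sum.inr) ⁻¹' encodeLeast j A = leastSet A := by
  ext x
  simp [encodeLeast, hj.eq_iff]

theorem encodeLeast_injective (hj : Function.Injective j) :
    Function.Injective (encodeLeast j) := fun A C h => by
  rw [← preimage_inl_encodeLeast hj A, h, preimage_inl_encodeLeast hj]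

theorem encodeLeast_nonempty_iff : (encodeLeast j A).Nonempty ↔ A.Nonempty := by
  rw [encodeLeast_eq, union_nonempty, image_nonempty, image_nonempty]
  exact or_iff_left_of_imp fun h => h.mono (leastSet_subset A)

theorem encodeLeast_diff_subset {S : Set Y} (hA : A \ C ⊆ (j ∘ Sum.inl) ⁻¹' S)
    (hleast : leastSet A \ leastSet C ⊆ (j ∘ Sum.inr) ⁻¹' S) :
    encodeLeast j A \ encodeLeast j C ⊆ S := by
  rw [encodeLeast_eq, encodeLeast_eq]
  rintro _ ⟨⟨x, hx, rfl⟩ | ⟨x, hx, rfl⟩, hxC⟩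
  · exact hA ⟨hx, fun h => hxC (Or.inl (mem_image_of_mem _ h))⟩
  · exact hleast ⟨hx, fun h => hxC (Or.inr (mem_image_of_mem _ h))⟩

theorem diff_subset_preimage_inl_of_encodeLeast (hj : Function.Injective j) {S : Set Y}
    (h : encodeLeast j A \ encodeLeast j C ⊆ S) : A \ C ⊆ (j ∘ Sum.inl) ⁻¹' S := by
  rw [← preimage_inl_encodeLeast hj A, ← preimage_inl_encodeLeast hj C, ← preimage_sdiff]
  exact preimage_mono h

theorem leastSet_diff_subset_preimage_inr_of_encodeLeast (hj : Function.Injective j) {S : Set Y}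
    (h : encodeLeast j A \ encodeLeast j C ⊆ S) :
    leastSet A \ leastSet C ⊆ (j ∘ Sum.inr) ⁻¹' S := by
  rw [← preimage_inr_encodeLeast hj A, ← preimage_inr_encodeLeast hj C, ← preimage_sdiff]
  exact preimage_mono h

theorem encodeLeast_subset_ballSet_aryBall {R : I} {S : J} (hR : (R : Set X) ⊆ Iic b)
    (h0 : Iic b ⊆ (j ∘ Sum.inl) ⁻¹' S) (h1 : Iic b ⊆ (j ∘ Sum.inr) ⁻¹' S)
    (hAC : A ⊆ ballSet (pointIdealBall I) C R) (hCA : C ⊆ ballSet (pointIdealBall I) A R) :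
    encodeLeast j A ⊆ ballSet (aryBall J) (encodeLeast j C) S := by
  have hC : A.Nonempty → C.Nonempty := nonempty_of_subset_ballSet hAC
  rw [subset_ballSet_pointIdealBall_iff] at hAC hCA
  have hleast : leastSet A \ leastSet C ⊆ Iic b :=
    leastSet_diff_subset_Iic (hAC.1.trans hR) fun h =>
      (hCA.2 h).mono (inter_subset_inter_right _ hR)
  rw [subset_ballSet_aryBall_iff, encodeLeast_nonempty_iff, encodeLeast_nonempty_iff]
  exact ⟨encodeLeast_diff_subset (hAC.1.trans (hR.trans h0)) (hleast.trans h1), hC⟩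

theorem subset_ballSet_pointIdealBall_of_encodeLeast [WellFoundedLT X] (hj : Function.Injective j)
    {R : I} {S : J} (hR : Iic b ⊆ (R : Set X))
    (h0 : (j ∘ Sum.inl) ⁻¹' S ⊆ Iic b) (h1 : (j ∘ Sum.inr) ⁻¹' S ⊆ Iic b)
    (hAC : encodeLeast j A ⊆ ballSet (aryBall J) (encodeLeast j C) S)
    (hCA : encodeLeast j C ⊆ ballSet (aryBall J) (encodeLeast j A) S) :
    A ⊆ ballSet (pointIdealBall I) C R := by
  rw [subset_ballSet_aryBall_iff, encodeLeast_nonempty_iff, encodeLeast_nonempty_iff] at hAC hCA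
  have hdiff : A \ C ⊆ Iic b := (diff_subset_preimage_inl_of_encodeLeast hj hAC.1).trans h0
  have hleast : leastSet C \ leastSet A ⊆ Iic b :=
    (leastSet_diff_subset_preimage_inr_of_encodeLeast hj hCA.1).trans h1
  refine subset_ballSet_pointIdealBall_iff.2 ⟨hdiff.trans hR, fun hne => ?_⟩
  exact (inter_Iic_nonempty_of_leastSet_diff_subset (hAC.2 (hne.mono sdiff_subset)) hdiff hleast
    hne).mono (inter_subset_inter_right _ hR)

theorem isCoarse_encodeLeast (hI : ∀ R ∈ I, BddAbove R)
    (hJ : ∀ b, ∃ S ∈ J, Iic b ⊆ (j ∘ Sum.inl) ⁻¹' S ∧ Iic b ⊆ (j ∘ Sum.inr) ⁻¹' S) :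
    IsCoarse (expBall (pointIdealBall I)) (expBall (aryBall J)) (encodeLeast j) := by
  intro R
  obtain ⟨b, hb⟩ := hI R R.2
  obtain ⟨S, hS, h0, h1⟩ := hJ b
  refine ⟨⟨S, hS⟩, fun A => ?_⟩
  rintro _ ⟨C, ⟨hAC, hCA⟩, rfl⟩
  exact ⟨encodeLeast_subset_ballSet_aryBall hb h0 h1 hAC hCA,
    encodeLeast_subset_ballSet_aryBall hb h0 h1 hCA hAC⟩

theorem isEffectivelyProper_encodeLeast [WellFoundedLT X] (hj : Function.Injective j)
    (hI : ∀ b, Iic b ∈ I) (hJ : ∀ S ∈ J, BddAbove ((j ∘ Sum.inl) ⁻¹' S ∪ (j ∘ Sum.inr) ⁻¹' S)) :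
    IsEffectivelyProper (expBall (pointIdealBall I)) (expBall (aryBall J)) (encodeLeast j) := by
  intro S
  obtain ⟨b, hb⟩ := hJ S S.2
  obtain ⟨h0, h1⟩ := union_subset_iff.1 (show _ ⊆ Iic b from hb)
  refine ⟨⟨Iic b, hI b⟩, fun A C ⟨hAC, hCA⟩ => ?_⟩
  exact ⟨subset_ballSet_pointIdealBall_of_encodeLeast hj subset_rfl h0 h1 hAC hCA,
    subset_ballSet_pointIdealBall_of_encodeLeast hj subset_rfl h0 h1 hCA hAC⟩

end EncodeLeast

theorem bddAbove_of_mk_lt_cof [LinearOrder X] {s : Set X} (hs : #s < Order.cof X) :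
    BddAbove s :=
  .of_not_isCofinal fun h => (Order.cof_le h).not_gt hs

namespace Cardinal

variable {κ : Cardinal.{u}}

theorem mk_Iic_toType_ord_lt (hκ : ℵ₀ ≤ κ) (b : κ.ord.ToType) : #(Iic b) < κ := by
  rw [← Iio_insert]
  exact mk_insert_le.trans_lt (add_lt_of_lt hκ (by simpa using mk_Iio_lt b)
    (one_lt_aleph0.trans_le hκ))

theorem IsRegular.bddAbove_of_mk_lt (hκ : κ.IsRegular) {s : Set κ.ord.ToType} (hs : #s < κ) :
    BddAbove s :=
  bddAbove_of_mk_lt_cof (by rwa [Ordinal.cof_toType, hκ.cof_ord])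

end Cardinal

/-- Let `κ` be a regular infinite cardinal (identified with the set `κ.ord.toType` of
ordinals below `κ`) and `K = {A ⊆ κ : |A| < κ}`. Then `exp(κ_K)` asymorphically embeds into
`exp(κ_{K-ary})`: there is an injective coarse embedding `𝒫(κ) → 𝒫(κ)` from the
hyperballean `exp(κ_K)` into the hyperballean `exp(κ_{K-ary})`. -/
theorem stmt12 (κ : Cardinal.{u}) (hκ : κ.IsRegular) :
    ∃ f : Set κ.ord.ToType → Set κ.ord.ToType,
      Function.Injective f ∧
      IsCoarseEmbedding (expBall (pointIdealBall {A : Set κ.ord.ToType | #A < κ}))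
        (expBall (aryBall {A : Set κ.ord.ToType | #A < κ})) f := by
  obtain ⟨j⟩ : Nonempty (κ.ord.ToType ⊕ κ.ord.ToType ↪ κ.ord.ToType) := by
    rw [← le_def, mk_sum, lift_id, mk_ord_toType, add_eq_self hκ.aleph0_le]
  have hunion_lt {s t : Set κ.ord.ToType} (hs : #s < κ) (ht : #t < κ) : #(s ∪ t : Set _) < κ :=
    (mk_union_le s t).trans_lt (add_lt_of_lt hκ.aleph0_le hs ht)
  refine ⟨encodeLeast j, encodeLeast_injective j.injective, ?_, ?_⟩
  · refine isCoarse_encodeLeast (fun R hR => hκ.bddAbove_of_mk_lt hR) fun b =>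
      ⟨(j ∘ Sum.inl) '' Iic b ∪ (j ∘ Sum.inr) '' Iic b, ?_,
        (subset_preimage_image _ _).trans (preimage_mono subset_union_left),
        (subset_preimage_image _ _).trans (preimage_mono subset_union_right)⟩
    exact hunion_lt (mk_image_le.trans_lt (mk_Iic_toType_ord_lt hκ.aleph0_le b))
      (mk_image_le.trans_lt (mk_Iic_toType_ord_lt hκ.aleph0_le b))
  · refine isEffectivelyProper_encodeLeast j.injective (mk_Iic_toType_ord_lt hκ.aleph0_le)
      fun S hS => hκ.bddAbove_of_mk_lt (hunion_lt ?_ ?_)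
    · exact (mk_preimage_of_injective _ _ (j.injective.comp Sum.inl_injective)).trans_lt hS
    · exact (mk_preimage_of_injective _ _ (j.injective.comp Sum.inr_injective)).trans_lt hS
end

section
/- Let I be an ideal on a set X and let Y, Z be nonempty subsets of X. Then Y and Z lie in the same connected component of the hyperballean exp(X_{I-ary}) — equivalently, there exists K ∈ I with Z ∈ exp B_{I-ary}(Y,K) — if and only if the symmetric difference Y △ Z belongs to I. -/
open Set Cardinal

universe u v

variable {X : Type*} {Y : Type*} {P : Type*} {Q : Type*}

lemma ballSet_ary {X : Type u} (I : Set (Set X)) (A : Set X) (hA : A.Nonempty) (K : I) :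
    ballSet (aryBall I) A K = A ∪ (K : Set X) := by
  ext x
  simp only [ballSet, aryBall, mem_iUnion, Set.mem_insert_iff, Set.mem_union]
  constructor
  · rintro ⟨y, hy, (rfl | hx)⟩
    · exact Or.inl hy
    · exact Or.inr hx
  · rintro (hx | hx)
    · exact ⟨x, hx, Or.inl rfl⟩
    · obtain ⟨y, hy⟩ := hA
      exact ⟨y, hy, Or.inr hx⟩

/-- For an ideal `I` on `X` and nonempty subsets `Y, Z ⊆ X`: `Y` and `Z` lie in the same
connected component of `exp(X_{I-ary})` (i.e. there is `K ∈ I` with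
`Z ∈ exp B_{I-ary}(Y,K)`) if and only if `Y △ Z ∈ I`. -/
theorem stmt15 {X : Type u} (I : Set (Set X)) (hI : IsIdeal I) (Y Z : Set X)
    (hY : Y.Nonempty) (hZ : Z.Nonempty) :
    Z ∈ balleanComponent (expBall (aryBall I)) Y ↔ symmDiff Y Z ∈ I := by
  constructor
  · rintro ⟨K, h1, h2⟩
    rw [ballSet_ary I Z hZ K] at h1
    rw [ballSet_ary I Y hY K] at h2
    apply hI.1 K K.2
    intro x hx
    rcases hx with ⟨hxY, hxZ⟩ | ⟨hxZ, hxY⟩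
    · rcases h1 hxY with h | h
      · exact absurd h hxZ
      · exact h
    · rcases h2 hxZ with h | h
      · exact absurd h hxY
      · exact h
  · intro h
    refine ⟨⟨symmDiff Y Z, h⟩, ?_, ?_⟩
    · rw [ballSet_ary I Z hZ]
      intro x hx
      by_cases hxZ : x ∈ Z
      · exact Or.inl hxZ
      · exact Or.inr (Or.inl ⟨hx, hxZ⟩)
    · rw [ballSet_ary I Y hY]
      intro x hx
      by_cases hxY : x ∈ Y
      · exact Or.inl hxY
      · exact Or.inr (Or.inr ⟨hx, hxY⟩)
end

section
/- Let I be an ideal on a set X. For every subset A of X, the connected component of A in the hyperballean exp(X_I) coincides with the connected component of A in the hyperballean exp(X_{I-ary}); in particular, exp(X_I) and exp(X_{I-ary}) have the same number of connected components. -/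
open Set Cardinal

universe u v

variable {X : Type*} {Y : Type*} {P : Type*} {Q : Type*}

/-- For an ideal `I` on `X`, every `A ⊆ X` has the same connected component in `exp(X_I)` as
in `exp(X_{I-ary})`; in particular the two hyperballeans have the same number of connected
components. -/
theorem stmt17 {X : Type u} (I : Set (Set X)) (hI : IsIdeal I) :
    (∀ A : Set X,
      balleanComponent (expBall (pointIdealBall I)) A =
        balleanComponent (expBall (aryBall I)) A) ∧
    Cardinal.mk {S : Set (Set X) // ∃ A : Set X,
        S = balleanComponent (expBall (pointIdealBall I)) A} =
      Cardinal.mk {S : Set (Set X) // ∃ A : Set X,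
        S = balleanComponent (expBall (aryBall I)) A} := by
  have hmono : ∀ (S : Set X) (r : I), ballSet (pointIdealBall I) S r ⊆ ballSet (aryBall I) S r := by
    intro S r z hz
    simp only [ballSet, mem_iUnion] at hz ⊢
    obtain ⟨y, hy, hz⟩ := hz
    refine ⟨y, hy, ?_⟩
    rcases hz with h | h
    · exact Or.inl h
    · exact Or.inr h.1
  have key : ∀ A : Set X,
      balleanComponent (expBall (pointIdealBall I)) A =
        balleanComponent (expBall (aryBall I)) A := by
    intro A
    ext C
    simp only [balleanComponent, expBall, mem_setOf_eq]
    constructor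
    · rintro ⟨r, h1, h2⟩
      exact ⟨r, h1.trans (hmono C r), h2.trans (hmono A r)⟩
    · rintro ⟨K, h1, h2⟩
      rcases A.eq_empty_or_nonempty with hA | ⟨a, ha⟩
      · subst hA
        have hC : C = ∅ := by
          rcases C.eq_empty_or_nonempty with h | ⟨c, hc⟩
          · exact h
          · exfalso
            have := h2 hc
            simp only [ballSet, mem_iUnion] at this
            obtain ⟨y, hy, _⟩ := this
            exact hy
        subst hC
        exact ⟨K, by simp, by simp⟩
      · -- A nonempty; get c ∈ C from h1
        have hac := h1 ha
        simp only [ballSet, mem_iUnion] at hac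
        obtain ⟨c, hc, _⟩ := hac
        have hK' : (K : Set X) ∪ {a, c} ∈ I := by
          refine hI.2.1 _ K.2 _ (hI.2.2.1 _ ?_)
          exact Set.toFinite {a, c}
        refine ⟨⟨(K : Set X) ∪ {a, c}, hK'⟩, ?_, ?_⟩
        · intro x hx
          have hx' := h1 hx
          simp only [ballSet, mem_iUnion, aryBall, mem_insert_iff] at hx'
          simp only [ballSet, mem_iUnion, pointIdealBall, mem_insert_iff, mem_setOf_eq]
          obtain ⟨y, hy, hxy⟩ := hx'
          rcases hxy with h | h
          · exact ⟨y, hy, Or.inl h⟩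
          · exact ⟨c, hc, Or.inr ⟨Or.inl h, Or.inr (by simp)⟩⟩
        · intro x hx
          have hx' := h2 hx
          simp only [ballSet, mem_iUnion, aryBall, mem_insert_iff] at hx'
          simp only [ballSet, mem_iUnion, pointIdealBall, mem_insert_iff, mem_setOf_eq]
          obtain ⟨y, hy, hxy⟩ := hx'
          rcases hxy with h | h
          · exact ⟨y, hy, Or.inl h⟩
          · exact ⟨a, ha, Or.inr ⟨Or.inl h, Or.inr (by simp)⟩⟩
  refine ⟨key, ?_⟩
  simp only [key]
end
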